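/- arXiv:2505.05574 — 5 statements merged into one kernel-verified Lean document; each statement's English description precedes it below -/
import Mathlib

section
/- For Re(s) > max{-ν, 0}, the function W_ν(s) := ∫₀^∞ Γ(ν, 2x) e^x x^{s-1} dx equals B(1/2; s, 1-s-ν) · Γ(s+ν), where B(z; a, b) = ∫₀^z u^{a-1}(1-u)^{b-1} du is the incomplete Beta function and Γ(ν, z) = ∫_z^∞ t^{ν-1} e^{-t} dt is the upper incomplete Gamma function. -/
open MeasureTheory Real Set Filter Asymptotics

/-- Upper incomplete Gamma function `Γ(ν, x) = ∫_x^∞ t^(ν-1) e^(-t) dt`. -/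
noncomputable def Ginc (ν x : ℝ) : ℝ := ∫ t in Set.Ioi x, t ^ (ν - 1) * Real.exp (-t)

/-!
Writing `Γ(ν, 2x)` as an integral over `t > 2x` turns `W_ν(s)` into a double integral over the
wedge `0 < 2x < t`. After swapping the order, the substitution `x = t u` (Jacobian `t`) maps the
wedge onto `t > 0, 0 < u < 1/2`, where the integrand becomes `u^(s-1) t^(s+ν-1) e^(-(1-u)t)`.
With `σ = Re s` this is dominated by the product `t^(σ+ν-1) e^(-t/2) · u^(σ-1)`, which gives
absolute convergence on both sides of the substitution, and after swapping once more
the `t`-integral is `Γ(s+ν) (1-u)^(-(s+ν))`.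
-/

local notation "ρ" => volume.restrict (Ioi (0 : ℝ))

section SubstitutionOnIoi

variable {E : Type*} [NormedAddCommGroup E] [NormedSpace ℝ E]

theorem integral_Ioi_zero_smul_comp_mul (g : ℝ → E) {t : ℝ} (ht : 0 < t) :
    ∫ u in Ioi 0, t • g (t * u) = ∫ x in Ioi 0, g x := by
  rw [integral_smul, integral_comp_mul_left_Ioi' g 0 ht, mul_zero]

theorem integrableOn_Ioi_zero_of_smul_comp_mul {g : ℝ → E} {t : ℝ} (ht : 0 < t)
    (hg : IntegrableOn (fun u => t • g (t * u)) (Ioi 0)) : IntegrableOn g (Ioi 0) := by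
  have hg' : IntegrableOn (fun u => g (t * u)) (Ioi 0) :=
    IntegrableOn.congr_fun (hg.smul t⁻¹)
      (fun u _ => by simp [smul_smul, inv_mul_cancel₀ ht.ne']) measurableSet_Ioi
  simpa using (integrableOn_Ioi_comp_mul_left_iff g 0 ht).mp hg'

variable {f h : ℝ → ℝ → E}

theorem integrable_of_integrable_smul_comp_mul
    (hf : AEStronglyMeasurable (Function.uncurry f) (Measure.prod ρ ρ))
    (hh : Integrable (Function.uncurry h) (Measure.prod ρ ρ))
    (hfh : ∀ t > 0, ∀ u > 0, t • f (t * u) t = h t u) :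
    Integrable (Function.uncurry f) (Measure.prod ρ ρ) := by
  rw [integrable_prod_iff' hf]
  constructor
  · filter_upwards [hh.prod_right_ae, self_mem_ae_restrict measurableSet_Ioi] with t ht ht0
    exact integrableOn_Ioi_zero_of_smul_comp_mul ht0
      (IntegrableOn.congr_fun ht (fun u hu => (hfh t ht0 u hu).symm) measurableSet_Ioi)
  · refine hh.integral_norm_prod_left.congr ?_
    filter_upwards [self_mem_ae_restrict measurableSet_Ioi] with t ht
    simp only [Function.uncurry_apply_pair]
    rw [← integral_Ioi_zero_smul_comp_mul (fun x => ‖f x t‖) ht]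
    refine setIntegral_congr_fun measurableSet_Ioi fun u hu => ?_
    simp only [← hfh t ht u hu, norm_smul, Real.norm_of_nonneg ht.le, smul_eq_mul]

theorem integral_integral_swap_of_smul_comp_mul [CompleteSpace E]
    (hf : AEStronglyMeasurable (Function.uncurry f) (Measure.prod ρ ρ))
    (hh : Integrable (Function.uncurry h) (Measure.prod ρ ρ))
    (hfh : ∀ t > 0, ∀ u > 0, t • f (t * u) t = h t u) :
    ∫ x in Ioi 0, ∫ t in Ioi 0, f x t = ∫ t in Ioi 0, ∫ u in Ioi 0, h t u := by
  rw [integral_integral_swap (integrable_of_integrable_smul_comp_mul hf hh hfh)]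
  refine setIntegral_congr_fun measurableSet_Ioi fun t ht => ?_
  rw [← integral_Ioi_zero_smul_comp_mul (f · t) ht]
  exact setIntegral_congr_fun measurableSet_Ioi fun u hu => hfh t ht u hu

end SubstitutionOnIoi

noncomputable def incGammaKernel (ν : ℝ) (s : ℂ) (x t : ℝ) : ℂ :=
  (Ioi (2 * x)).indicator
    (fun t => ((t ^ (ν - 1) * Real.exp (-t) : ℝ) : ℂ) * (Real.exp x : ℂ) * (x : ℂ) ^ (s - 1)) t

noncomputable def betaGammaKernel (ν : ℝ) (s : ℂ) (t u : ℝ) : ℂ :=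
  (Iio (1 / 2 : ℝ)).indicator
    (fun u => (u : ℂ) ^ (s - 1) * ((t : ℂ) ^ (s + ν - 1) * Complex.exp (-((1 - u : ℝ) * t)))) u

section Kernels

variable {ν : ℝ} {s : ℂ}

theorem ofReal_Ginc_mul_eq_integral_incGammaKernel {x : ℝ} (hx : 0 ≤ x) :
    (Ginc ν (2 * x) : ℂ) * (Real.exp x : ℂ) * (x : ℂ) ^ (s - 1)
      = ∫ t in Ioi 0, incGammaKernel ν s x t := by
  simp only [incGammaKernel]
  rw [setIntegral_indicator measurableSet_Ioi, Ioi_inter_Ioi, sup_eq_right.mpr (by linarith),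
    Ginc, ← integral_complex_ofReal, ← integral_mul_const, ← integral_mul_const]

theorem measurable_incGammaKernel : Measurable (Function.uncurry (incGammaKernel ν s)) := by
  simp only [Function.uncurry_def, incGammaKernel, indicator_apply, mem_Ioi]
  refine Measurable.ite (measurableSet_lt ?_ ?_) ?_ measurable_const <;> fun_prop

theorem measurable_betaGammaKernel : Measurable (Function.uncurry (betaGammaKernel ν s)) := by
  simp only [Function.uncurry_def, betaGammaKernel, indicator_apply, mem_Iio]
  refine Measurable.ite (measurableSet_lt ?_ ?_) ?_ measurable_const <;> fun_prop

theorem smul_incGammaKernel_mul {t u : ℝ} (ht : 0 < t) (hu : 0 < u) :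
    t • incGammaKernel ν s (t * u) t = betaGammaKernel ν s t u := by
  have hmem : t ∈ Ioi (2 * (t * u)) ↔ u ∈ Iio (1 / 2 : ℝ) := by
    rw [mem_Ioi, mem_Iio]
    constructor <;> intro h <;> nlinarith
  simp only [incGammaKernel, betaGammaKernel, indicator_apply, hmem]
  split_ifs
  · have htc : (t : ℂ) ≠ 0 := Complex.ofReal_ne_zero.mpr ht.ne'
    have hpow : (t : ℂ) ^ (s + ν - 1) = t * (t : ℂ) ^ ((ν : ℂ) - 1) * (t : ℂ) ^ (s - 1) := by
      rw [show s + (ν : ℂ) - 1 = 1 + ((ν : ℂ) - 1) + (s - 1) by ring,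
        Complex.cpow_add _ _ htc, Complex.cpow_add _ _ htc, Complex.cpow_one]
    have hexp : Complex.exp (-((1 - u : ℝ) * t)) = Complex.exp (-t) * Complex.exp (t * u) := by
      rw [← Complex.exp_add]; push_cast; ring_nf
    rw [Complex.ofReal_mul t u, Complex.mul_cpow_ofReal_nonneg ht.le hu.le, Complex.ofReal_mul,
      Complex.ofReal_cpow ht.le, hpow, hexp, Complex.real_smul]
    push_cast
    ring
  · exact smul_zero t

theorem norm_betaGammaKernel_le {t u : ℝ} (ht : 0 < t) (hu : 0 < u) :
    ‖betaGammaKernel ν s t u‖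
      ≤ t ^ (s.re + ν - 1) * Real.exp (-(1 / 2) * t)
          * (Iio (1 / 2 : ℝ)).indicator (· ^ (s.re - 1)) u := by
  simp only [betaGammaKernel, indicator_apply]
  split_ifs with hu2
  · rw [norm_mul, norm_mul, Complex.norm_cpow_eq_rpow_re_of_pos hu,
      Complex.norm_cpow_eq_rpow_re_of_pos ht, ← Complex.ofReal_mul, ← Complex.ofReal_neg,
      ← Complex.ofReal_exp, Complex.norm_real, Real.norm_of_nonneg (Real.exp_pos _).le]
    have hexp : Real.exp (-((1 - u) * t)) ≤ Real.exp (-(1 / 2) * t) := by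
      gcongr
      nlinarith [mem_Iio.mp hu2]
    simp only [Complex.add_re, Complex.sub_re, Complex.ofReal_re, Complex.one_re]
    have := Real.rpow_nonneg hu.le (s.re - 1)
    have := Real.rpow_nonneg ht.le (s.re + ν - 1)
    nlinarith [mul_le_mul_of_nonneg_left hexp this]
  · simp

theorem integrable_betaGammaKernel (hs : 0 < s.re) (hsν : 0 < s.re + ν) :
    Integrable (Function.uncurry (betaGammaKernel ν s)) (Measure.prod ρ ρ) := by
  have hexp :
      IntegrableOn (fun t : ℝ => t ^ (s.re + ν - 1) * Real.exp (-(1 / 2) * t)) (Ioi 0) := by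
    simpa using integrableOn_rpow_mul_exp_neg_mul_rpow (p := 1) (b := 1 / 2) (by linarith)
      one_pos (by norm_num)
  have hpow : IntegrableOn ((Iio (1 / 2 : ℝ)).indicator (· ^ (s.re - 1))) (Ioi 0) := by
    rw [IntegrableOn, integrable_indicator_iff measurableSet_Iio, IntegrableOn,
      Measure.restrict_restrict measurableSet_Iio, Iio_inter_Ioi]
    exact ((intervalIntegrable_iff_integrableOn_Ioc_of_le (by norm_num)).mp
      (intervalIntegral.intervalIntegrable_rpow' (by linarith))).mono_set Ioo_subset_Ioc_self
  refine (hexp.mul_prod hpow).mono' measurable_betaGammaKernel.aestronglyMeasurable ?_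
  rw [Measure.prod_restrict, ae_restrict_iff' (measurableSet_Ioi.prod measurableSet_Ioi)]
  exact Eventually.of_forall fun p hp => norm_betaGammaKernel_le hp.1 hp.2

theorem integral_betaGammaKernel (hsν : 0 < s.re + ν) (u : ℝ) :
    ∫ t in Ioi 0, betaGammaKernel ν s t u
      = (Iio (1 / 2 : ℝ)).indicator
          (fun u => (u : ℂ) ^ (s - 1) * (1 - (u : ℂ)) ^ ((1 - s - ν) - 1)) u
        * Complex.Gamma (s + ν) := by
  simp only [betaGammaKernel, indicator_apply]
  split_ifs with hu
  · have hre : 0 < (s + ν).re := by simpa using hsν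
    have h1u : 0 < 1 - u := by linarith [mem_Iio.mp hu]
    have harg : ((1 - u : ℝ) : ℂ).arg ≠ π := by
      rw [Complex.arg_ofReal_of_nonneg h1u.le]
      exact pi_ne_zero.symm
    rw [integral_const_mul, Complex.integral_cpow_mul_exp_neg_mul_Ioi hre h1u, one_div,
      Complex.inv_cpow _ _ harg, ← Complex.cpow_neg, show -(s + ν) = (1 - s - ν) - 1 by ring]
    push_cast
    ring
  · simp

end Kernels

/-- For `Re s > max (-ν) 0`,
`∫₀^∞ Γ(ν, 2x) e^x x^(s-1) dx = B(1/2; s, 1-s-ν) · Γ(s+ν)`. -/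
theorem W_eq_incompleteBeta_mul_Gamma (ν : ℝ) (s : ℂ) (hs : s.re > max (-ν) 0) :
    (∫ x in Set.Ioi (0:ℝ), (Ginc ν (2*x) : ℂ) * (Real.exp x : ℂ) * (x:ℂ) ^ (s - 1))
      = (∫ u in (0:ℝ)..(1/2 : ℝ), (u:ℂ) ^ (s - 1) * ((1:ℂ) - (u:ℂ)) ^ ((1 - s - (ν:ℂ)) - 1))
          * Complex.Gamma (s + (ν:ℂ)) := by
  have hs0 : 0 < s.re := (le_max_right _ _).trans_lt hs
  have hsν : 0 < s.re + ν := by linarith [(le_max_left (-ν) 0).trans_lt hs]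
  have hint := integrable_betaGammaKernel hs0 hsν
  calc _ = ∫ x in Ioi 0, ∫ t in Ioi 0, incGammaKernel ν s x t :=
        setIntegral_congr_fun measurableSet_Ioi fun x hx =>
          ofReal_Ginc_mul_eq_integral_incGammaKernel (mem_Ioi.mp hx).le
    _ = ∫ t in Ioi 0, ∫ u in Ioi 0, betaGammaKernel ν s t u :=
        integral_integral_swap_of_smul_comp_mul measurable_incGammaKernel.aestronglyMeasurable hint
          fun t ht u hu => smul_incGammaKernel_mul ht hu
    _ = ∫ u in Ioi 0, ∫ t in Ioi 0, betaGammaKernel ν s t u := integral_integral_swap hint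
    _ = _ := by
      simp_rw [integral_betaGammaKernel hsν]
      rw [integral_mul_const, setIntegral_indicator measurableSet_Iio, Ioi_inter_Iio,
        intervalIntegral.integral_of_le (by norm_num), integral_Ioc_eq_integral_Ioo]
end

section
/- The integral ∫₀^∞ Γ(ν, 2x) e^x x^{s-1} dx converges absolutely whenever Re(s) > max{-ν, 0}. -/
open MeasureTheory Real Set Filter Asymptotics

/-! Write `t^(ν-1) e^(-t) = t^(μ-1) e^(-3t/4) · t^(ν-μ) e^(-t/4)` with `μ < 0` and `μ ≤ ν`: the
second factor is bounded on `t > 0`, so `Γ(ν, y) ≤ K y^μ e^(-3y/4)` for all `y > 0`. The integrand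
is then dominated by a multiple of `x^(μ + Re s - 1) e^(-x/2)`, integrable on `(0, ∞)` as soon as
`μ + Re s > 0`. The choice `μ = min ν (-Re s / 2)` meets all three constraints when
`Re s > max (-ν) 0`. -/

lemma rpow_le_mul_exp_mul {q c t : ℝ} (hq : 0 ≤ q) (hc : 0 < c) (ht : 0 ≤ t) :
    t ^ q ≤ ((q + 1) / c) ^ q * exp (c * t) := by
  have hk : 0 < (q + 1) / c := by positivity
  set u := c * t / (q + 1) with hu
  have hu0 : 0 ≤ u := by positivity
  have hut : t = (q + 1) / c * u := by rw [hu]; field_simp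
  calc t ^ q = ((q + 1) / c) ^ q * u ^ q := by rw [hut, mul_rpow hk.le hu0]
    _ ≤ ((q + 1) / c) ^ q * exp u ^ q := by
        gcongr; linarith [add_one_le_exp u]
    _ = ((q + 1) / c) ^ q * exp (q / (q + 1) * (c * t)) := by
        rw [← exp_mul, hu]; ring_nf
    _ ≤ ((q + 1) / c) ^ q * exp (c * t) := by
        gcongr ((q + 1) / c) ^ q * exp ?_
        exact mul_le_of_le_one_left (by positivity) (div_le_one_of_le₀ (by linarith) (by linarith))

lemma exists_rpow_mul_exp_neg_le {ν μ b : ℝ} (hμν : μ ≤ ν) (hb : b < 1) :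
    ∃ C, 0 ≤ C ∧ ∀ t : ℝ, 0 < t → t ^ (ν - 1) * exp (-t) ≤ C * (t ^ (μ - 1) * exp (-b * t)) := by
  refine ⟨((ν - μ + 1) / (1 - b)) ^ (ν - μ), by positivity, fun t ht => ?_⟩
  have hsplit : t ^ (ν - 1) * exp (-t)
      = t ^ (ν - μ) * exp (-((1 - b) * t)) * (t ^ (μ - 1) * exp (-b * t)) := by
    rw [show ν - 1 = (ν - μ) + (μ - 1) by ring, rpow_add ht]
    rw [show -t = -((1 - b) * t) + -b * t by ring, exp_add]
    ring
  rw [hsplit]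
  gcongr
  rw [exp_neg, ← div_eq_mul_inv, div_le_iff₀ (exp_pos _)]
  exact rpow_le_mul_exp_mul (by linarith) (by linarith) ht.le

lemma Ginc_nonneg (ν : ℝ) {y : ℝ} (hy : 0 ≤ y) : 0 ≤ Ginc ν y :=
  setIntegral_nonneg measurableSet_Ioi fun _ ht =>
    mul_nonneg (rpow_nonneg (hy.trans ht.le) _) (exp_pos _).le

lemma exists_Ginc_le_rpow_mul_exp {ν μ b : ℝ} (hμ : μ < 0) (hμν : μ ≤ ν) (hb₀ : 0 ≤ b)
    (hb : b < 1) :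
    ∃ K, ∀ y : ℝ, 0 < y → Ginc ν y ≤ K * y ^ μ * exp (-b * y) := by
  obtain ⟨C, hC₀, hC⟩ := exists_rpow_mul_exp_neg_le hμν hb
  refine ⟨-C / μ, fun y hy => ?_⟩
  have hint : IntegrableOn (fun t : ℝ => C * exp (-b * y) * t ^ (μ - 1)) (Ioi y) :=
    (integrableOn_Ioi_rpow_of_lt (by linarith) hy).const_mul _
  calc Ginc ν y ≤ ∫ t in Ioi y, C * exp (-b * y) * t ^ (μ - 1) := by
        refine integral_mono_of_nonneg ?_ hint ?_
        · filter_upwards [ae_restrict_mem measurableSet_Ioi] with t ht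
          exact mul_nonneg (rpow_nonneg (hy.trans ht).le _) (exp_pos _).le
        · filter_upwards [ae_restrict_mem measurableSet_Ioi] with t ht
          have ht0 : 0 < t := hy.trans ht
          calc t ^ (ν - 1) * exp (-t) ≤ C * (t ^ (μ - 1) * exp (-b * t)) := hC t ht0
            _ ≤ C * (t ^ (μ - 1) * exp (-b * y)) := by gcongr C * (_ * exp ?_); nlinarith [ht.out]
            _ = C * exp (-b * y) * t ^ (μ - 1) := by ring
    _ = -C / μ * y ^ μ * exp (-b * y) := by
        rw [integral_const_mul, integral_Ioi_rpow_of_lt (by linarith) hy, sub_add_cancel]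
        ring

@[fun_prop]
lemma measurable_Ginc (ν : ℝ) : Measurable (Ginc ν) := by
  have h : StronglyMeasurable fun p : ℝ × ℝ =>
      (Ioi p.1).indicator (fun t => t ^ (ν - 1) * exp (-t)) p.2 := by
    simp only [indicator, mem_Ioi]
    exact (Measurable.ite (measurableSet_lt measurable_fst measurable_snd) (by fun_prop)
      measurable_const).stronglyMeasurable
  have hG : Ginc ν = fun x => ∫ t, (Ioi x).indicator (fun t => t ^ (ν - 1) * exp (-t)) t := by
    ext x; exact (integral_indicator measurableSet_Ioi).symm
  exact hG ▸ (h.integral_prod_right' (ν := volume)).measurable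

lemma integrableOn_rpow_mul_exp_neg_mul {s b : ℝ} (hs : -1 < s) (hb : 0 < b) :
    IntegrableOn (fun x : ℝ => x ^ s * exp (-b * x)) (Ioi 0) := by
  simpa only [rpow_one] using integrableOn_rpow_mul_exp_neg_mul_rpow hs one_pos hb

/-- The integral `∫₀^∞ Γ(ν, 2x) e^x x^(s-1) dx` converges absolutely whenever
`Re s > max (-ν) 0`. -/
theorem W_integrable (ν : ℝ) (s : ℂ) (hs : s.re > max (-ν) 0) :
    IntegrableOn (fun x : ℝ => (Ginc ν (2*x) : ℂ) * (Real.exp x : ℂ) * (x:ℂ) ^ (s - 1))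
      (Set.Ioi (0:ℝ)) := by
  set a := s.re
  set μ := min ν (-(a / 2))
  have ha : 0 < a := (le_max_right _ _).trans_lt hs
  have hμ : μ < 0 := (min_le_right _ _).trans_lt (by linarith)
  have hμa : -1 < μ + a - 1 := by
    have : -a < μ := lt_min (by linarith [le_max_left (-ν) 0]) (by linarith)
    linarith
  obtain ⟨K, hK⟩ :=
    exists_Ginc_le_rpow_mul_exp (b := 3 / 4) hμ (min_le_left _ _) (by norm_num) (by norm_num)
  refine ((integrableOn_rpow_mul_exp_neg_mul hμa one_half_pos).const_mul (K * 2 ^ μ)).mono'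
    (Measurable.aestronglyMeasurable (by fun_prop)) ?_
  filter_upwards [ae_restrict_mem measurableSet_Ioi] with x (hx : 0 < x)
  calc ‖(Ginc ν (2 * x) : ℂ) * (exp x : ℂ) * (x : ℂ) ^ (s - 1)‖
      = Ginc ν (2 * x) * exp x * x ^ (a - 1) := by
        have hG : 0 ≤ Ginc ν (2 * x) := Ginc_nonneg ν (by positivity)
        simp only [norm_mul, Complex.norm_real, norm_eq_abs, abs_of_nonneg hG, abs_exp,
          Complex.norm_cpow_eq_rpow_re_of_pos hx, Complex.sub_re, Complex.one_re]
        rfl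
    _ ≤ K * (2 * x) ^ μ * exp (-(3 / 4) * (2 * x)) * exp x * x ^ (a - 1) := by
        gcongr; exact hK _ (by positivity)
    _ = K * 2 ^ μ * (x ^ (μ + a - 1) * exp (-(1 / 2) * x)) := by
        rw [mul_rpow zero_le_two hx.le, show μ + a - 1 = μ + (a - 1) by ring, rpow_add hx,
          mul_assoc _ _ (exp x), ← exp_add]
        ring_nf
end

section
/- Suppose φ(s) = Σ_{n≥1} a_n λ_n^{−s} with λ_n > 0 increasing to infinity and Σ_{n≥1} |a_n| λ_n^{−α} < ∞ for some α. Then for ρ > 0, σ > 0, σ ≥ α, and x > 0 not equal to any λ_n: (1/Γ(ρ+1)) Σ_{λ_n ≤ x} a_n (x − λ_n)^ρ = (1/2πi) ∫_{σ−i∞}^{σ+i∞} Γ(s) φ(s) x^{s+ρ} / Γ(ρ+1+s) ds. -/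
/-!
The Mellin transform of the Riesz weight `u ↦ (1 - u)₊^ρ` is
`B(s, ρ + 1) = Γ(s) Γ(ρ + 1) / Γ(s + ρ + 1)`, so Mellin inversion at `u = λₙ / x` writes each
term `(x - λₙ)₊^ρ / Γ(ρ + 1)` as an integral over `Re s = σ`, and absolute convergence of the
Dirichlet series on that line lets us sum under the integral.

Mellin inversion needs `t ↦ B(σ + it, ρ + 1)` to be integrable. By `s B(s, ρ + 1) = ρ B(s + 1, ρ)`
it suffices to have `B(z, w) = O(|z|^(-w))` for `0 < w ≤ 1` and `Re z ≥ 1` (and `O(1/|z|)` for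
`w > 1`). For this, split `∫₀¹` at `1 - 1/|z|`: near `1` the trivial bound gives `|z|^(-w) / w`,
and on the rest one integration by parts against the increasing weight `(1 - u)^(w - 1)` gains
the factor `1/|z|`.
-/

open MeasureTheory Real Set Filter Asymptotics

theorem hasDerivAt_one_sub_rpow {u : ℝ} (hu : u < 1) (p : ℝ) :
    HasDerivAt (fun v => (1 - v) ^ p) (-p * (1 - u) ^ (p - 1)) u := by
  convert ((hasDerivAt_id' u).const_sub 1).rpow_const (p := p) (Or.inl (sub_pos.2 hu).ne') using 1
  ring

theorem integral_one_sub_rpow (w : ℝ) (hw : 0 < w) (a : ℝ) :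
    ∫ u in (1 - a)..1, (1 - u) ^ (w - 1) = a ^ w / w := by
  rw [intervalIntegral.integral_comp_sub_left (fun v => v ^ (w - 1)), sub_self, sub_sub_cancel,
    integral_rpow (Or.inl (by linarith)), sub_add_cancel, Real.zero_rpow hw.ne', sub_zero]

namespace Complex

theorem one_sub_cpow_eq_ofReal_rpow {u : ℝ} (hu : u ≤ 1) (w : ℝ) :
    (1 - (u : ℂ)) ^ ((w : ℂ) - 1) = (((1 - u) ^ (w - 1) : ℝ) : ℂ) := by
  rw [ofReal_cpow (by linarith)]
  push_cast
  rfl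

theorem norm_ofReal_cpow_le_one {u : ℝ} (hu0 : 0 ≤ u) (hu1 : u ≤ 1) {s : ℂ} (hs : 0 ≤ s.re) :
    ‖(u : ℂ) ^ s‖ ≤ 1 := by
  rcases hu0.eq_or_lt with rfl | hu0
  · by_cases hs0 : s = 0 <;> simp [hs0, zero_cpow]
  · rw [norm_cpow_eq_rpow_re_of_pos hu0]
    exact Real.rpow_le_one hu0.le hu1 hs

theorem norm_integral_cpow_mul_le_of_monotone {s : ℂ} (hs : 0 < s.re) {b : ℝ} (hb0 : 0 ≤ b)
    (hb1 : b ≤ 1) {f f' : ℝ → ℝ} (hf : ∀ u ∈ Icc 0 b, HasDerivAt f (f' u) u)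
    (hf' : ContinuousOn f' (Icc 0 b)) (hf'0 : ∀ u ∈ Icc 0 b, 0 ≤ f' u) (hf0 : 0 ≤ f 0) :
    ‖∫ u in (0:ℝ)..b, (u : ℂ) ^ (s - 1) * f u‖ ≤ 2 * f b / ‖s‖ := by
  have hs0 : s ≠ 0 := fun h => by simp [h] at hs
  set U : ℝ → ℂ := fun u => (u : ℂ) ^ s / s
  have hU_le : ∀ u ∈ Icc 0 b, ‖U u‖ ≤ ‖s‖⁻¹ := fun u hu => by
    rw [norm_div, div_eq_mul_inv]
    exact mul_le_of_le_one_left (by positivity)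
      (norm_ofReal_cpow_le_one hu.1 (hu.2.trans hb1) hs.le)
  have hIcc : uIcc 0 b = Icc 0 b := uIcc_of_le hb0
  rw [← hIcc] at hf'
  have hf'int : IntervalIntegrable f' volume 0 b := hf'.intervalIntegrable
  have hibp : ∫ u in (0:ℝ)..b, (f u : ℂ) * (u : ℂ) ^ (s - 1)
      = f b * U b - f 0 * U 0 - ∫ u in (0:ℝ)..b, (f' u : ℂ) * U u := by
    refine intervalIntegral.integral_mul_deriv_eq_deriv_mul_of_hasDeriv_right ?_ ?_ ?_ ?_ ?_
      (intervalIntegral.intervalIntegrable_cpow' (by simpa using hs))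
    · exact fun u hu => (hf u (hIcc ▸ hu)).ofReal_comp.continuousAt.continuousWithinAt
    · exact ((continuous_ofReal_cpow_const hs).div_const s).continuousOn
    · intro u hu
      rw [min_eq_left hb0, max_eq_right hb0] at hu
      exact (hf u (Ioo_subset_Icc_self hu)).ofReal_comp.hasDerivWithinAt
    · intro u hu
      rw [min_eq_left hb0, max_eq_right hb0] at hu
      have h := hasDerivAt_ofReal_cpow_const' hu.1.ne' (r := s - 1)
        (fun h => hs0 (by linear_combination h))
      simpa using h.hasDerivWithinAt
    · exact (continuous_ofReal.comp_continuousOn hf').intervalIntegrable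
  have hFTC : ∫ u in (0:ℝ)..b, f' u = f b - f 0 :=
    intervalIntegral.integral_eq_sub_of_hasDerivAt (fun u hu => hf u (hIcc ▸ hu)) hf'int
  have hrest : ‖∫ u in (0:ℝ)..b, (f' u : ℂ) * U u‖ ≤ (f b - f 0) / ‖s‖ := by
    rw [← hFTC, ← intervalIntegral.integral_div]
    refine intervalIntegral.norm_integral_le_of_norm_le hb0 (ae_of_all _ fun u hu => ?_)
      (hf'int.div_const _)
    have hu : u ∈ Icc 0 b := Ioc_subset_Icc_self hu
    rw [norm_mul, norm_real, Real.norm_of_nonneg (hf'0 u hu), div_eq_mul_inv]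
    exact mul_le_mul_of_nonneg_left (hU_le u hu) (hf'0 u hu)
  have hfb : 0 ≤ f b := by linarith [hFTC ▸ intervalIntegral.integral_nonneg hb0 hf'0]
  calc ‖∫ u in (0:ℝ)..b, (u : ℂ) ^ (s - 1) * f u‖
      = ‖f b * U b - f 0 * U 0 - ∫ u in (0:ℝ)..b, (f' u : ℂ) * U u‖ := by
        simp_rw [← hibp, mul_comm]
    _ ≤ f b * ‖s‖⁻¹ + (f b - f 0) / ‖s‖ := by
        simp only [U, ofReal_zero, zero_cpow hs0, zero_div, mul_zero, sub_zero]
        refine (norm_sub_le _ _).trans (add_le_add ?_ hrest)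
        rw [norm_mul, norm_real, Real.norm_of_nonneg hfb]
        exact mul_le_mul_of_nonneg_left (hU_le b ⟨hb0, le_rfl⟩) hfb
    _ ≤ 2 * f b / ‖s‖ := by
        rw [div_eq_mul_inv, div_eq_mul_inv]
        nlinarith [inv_nonneg.2 (norm_nonneg s)]

theorem norm_le_norm_add_one {s : ℂ} (hs : 0 ≤ s.re) : ‖s‖ ≤ ‖s + 1‖ := by
  refine (pow_le_pow_iff_left₀ (norm_nonneg _) (norm_nonneg _) two_ne_zero).1 ?_
  simp only [Complex.sq_norm, normSq_apply, add_re, add_im, one_re, one_im]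
  nlinarith

theorem norm_integral_cpow_mul_one_sub_cpow_le {z : ℂ} (hz : 1 ≤ z.re) {w : ℝ} (hw : 0 < w)
    {a : ℝ} (ha0 : 0 ≤ a) (ha1 : a ≤ 1) :
    ‖∫ u in (1 - a)..1, (u : ℂ) ^ (z - 1) * (1 - (u : ℂ)) ^ ((w : ℂ) - 1)‖ ≤ a ^ w / w := by
  rw [← integral_one_sub_rpow w hw a]
  refine intervalIntegral.norm_integral_le_of_norm_le (by linarith) (ae_of_all _ fun u hu => ?_)
    ?_
  · have hu0 : 0 < u := by linarith [hu.1]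
    have h1u : 0 ≤ (1 - u) ^ (w - 1) := Real.rpow_nonneg (by linarith [hu.2]) _
    rw [one_sub_cpow_eq_ofReal_rpow hu.2, norm_mul, norm_real, Real.norm_of_nonneg h1u]
    exact mul_le_of_le_one_left h1u (norm_ofReal_cpow_le_one hu0.le hu.2 (by simpa using hz))
  · simpa using ((intervalIntegral.intervalIntegrable_rpow' (a := 0) (b := a)
      (by linarith : (-1:ℝ) < w - 1)).comp_sub_left 1).symm

theorem norm_betaIntegral_le_inv {z : ℂ} (hz : 1 ≤ z.re) {w : ℝ} (hw : 0 < w) :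
    ‖betaIntegral z w‖ ≤ 1 / w := by
  simpa [betaIntegral] using norm_integral_cpow_mul_one_sub_cpow_le hz hw zero_le_one le_rfl

theorem norm_integral_cpow_mul_one_sub_cpow_le_of_le_one {z : ℂ} (hz : 0 < z.re) {w : ℝ}
    (hw : w ≤ 1) {a : ℝ} (ha0 : 0 < a) (ha1 : a ≤ 1) :
    ‖∫ u in (0:ℝ)..(1 - a), (u : ℂ) ^ (z - 1) * (1 - (u : ℂ)) ^ ((w : ℂ) - 1)‖
      ≤ 2 * a ^ (w - 1) / ‖z‖ := by
  have hf : ∀ u ∈ Icc 0 (1 - a),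
      HasDerivAt (fun v => (1 - v) ^ (w - 1)) (-(w - 1) * (1 - u) ^ (w - 1 - 1)) u :=
    fun u hu => hasDerivAt_one_sub_rpow (by linarith [hu.2]) _
  have hf' : ContinuousOn (fun u => -(w - 1) * (1 - u) ^ (w - 1 - 1)) (Icc 0 (1 - a)) :=
    fun u hu => (continuousAt_const.mul ((continuousAt_const.sub (continuousAt_id' _)).rpow_const
      (Or.inl (sub_pos.2 (by linarith [hu.2])).ne'))).continuousWithinAt
  have hf'0 : ∀ u ∈ Icc 0 (1 - a), 0 ≤ -(w - 1) * (1 - u) ^ (w - 1 - 1) := fun u hu =>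
    mul_nonneg (by linarith) (Real.rpow_nonneg (by linarith [hu.2]) _)
  rw [intervalIntegral.integral_congr
    (g := fun u : ℝ => (u : ℂ) ^ (z - 1) * ((1 - u) ^ (w - 1) : ℝ)) fun u hu => by
      rw [uIcc_of_le (by linarith)] at hu
      simp only [one_sub_cpow_eq_ofReal_rpow (by linarith [hu.2] : u ≤ 1)]]
  simpa using norm_integral_cpow_mul_le_of_monotone hz (by linarith) (by linarith) hf hf' hf'0
    (by simp)

theorem norm_betaIntegral_le_of_le_one {z : ℂ} (hz : 1 ≤ z.re) (hz2 : 2 ≤ ‖z‖) {w : ℝ}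
    (hw0 : 0 < w) (hw1 : w ≤ 1) :
    ‖betaIntegral z w‖ ≤ (2 + 1 / w) * ‖z‖ ^ (-w) := by
  set a := ‖z‖⁻¹ with ha_def
  have ha0 : 0 < a := by positivity
  have ha : a ≤ 1 / 2 := by rw [ha_def, inv_le_comm₀ (by linarith) (by norm_num)]; linarith
  have hmem : 1 - a ∈ uIcc (0:ℝ) 1 := by rw [uIcc_of_le zero_le_one]; constructor <;> linarith
  have hconv := betaIntegral_convergent (u := z) (v := w) (by linarith) (by simpa using hw0)
  have hhead := norm_integral_cpow_mul_one_sub_cpow_le_of_le_one (by linarith) hw1 ha0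
    (by linarith)
  have htail := norm_integral_cpow_mul_one_sub_cpow_le hz hw0 ha0.le (by linarith)
  rw [betaIntegral, ← intervalIntegral.integral_add_adjacent_intervals
    (hconv.mono_set (uIcc_subset_uIcc_left hmem)) (hconv.mono_set (uIcc_subset_uIcc_right hmem))]
  calc _ ≤ 2 * a ^ (w - 1) / ‖z‖ + a ^ w / w := (norm_add_le _ _).trans (add_le_add hhead htail)
    _ = (2 + 1 / w) * ‖z‖ ^ (-w) := by
      rw [div_eq_mul_inv _ ‖z‖, ← ha_def, mul_assoc, ← Real.rpow_add_one ha0.ne', sub_add_cancel,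
        ha_def, Real.inv_rpow (norm_nonneg _), ← Real.rpow_neg (norm_nonneg _)]
      ring

theorem norm_betaIntegral_add_one_right {u : ℂ} (hu : 0 < u.re) {v : ℝ} (hv : 0 < v) :
    ‖betaIntegral u (v + 1)‖ = v * ‖betaIntegral (u + 1) v‖ / ‖u‖ := by
  have hu0 : u ≠ 0 := fun h => by simp [h] at hu
  rw [eq_div_iff (norm_ne_zero_iff.2 hu0), mul_comm, ← norm_mul,
    betaIntegral_recurrence hu (by simpa using hv), norm_mul, norm_real, Real.norm_of_nonneg hv.le]

theorem norm_betaIntegral_le_inv_norm {z : ℂ} (hz : 0 < z.re) {w : ℝ} (hw : 1 < w) :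
    ‖betaIntegral z w‖ ≤ ‖z‖⁻¹ := by
  have hB := norm_betaIntegral_le_inv (z := z + 1) (by simp; linarith) (w := w - 1) (by linarith)
  rw [le_div_iff₀ (by linarith), mul_comm] at hB
  have h := norm_betaIntegral_add_one_right hz (v := w - 1) (by linarith)
  push_cast at h hB
  rw [sub_add_cancel] at h
  rw [h, div_eq_mul_inv]
  exact mul_le_of_le_one_left (by positivity) hB

theorem norm_betaIntegral_add_one_le {s : ℂ} (hs : 0 < s.re) (hs2 : 2 ≤ ‖s‖) {ρ : ℝ}
    (hρ : 0 < ρ) : ‖betaIntegral s (ρ + 1)‖ ≤ (2 * ρ + 1) * ‖s‖ ^ (-(1 + min ρ 1)) := by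
  have hs0 : 0 < ‖s‖ := by linarith
  have hss : ‖s‖ ≤ ‖s + 1‖ := norm_le_norm_add_one hs.le
  rw [norm_betaIntegral_add_one_right hs hρ, div_le_iff₀ hs0]
  rcases le_or_gt ρ 1 with hρ1 | hρ1
  · have hB := norm_betaIntegral_le_of_le_one (z := s + 1) (by simp; linarith) (hs2.trans hss)
      hρ hρ1
    calc ρ * ‖betaIntegral (s + 1) ρ‖ ≤ ρ * ((2 + 1 / ρ) * ‖s‖ ^ (-ρ)) := by
          refine mul_le_mul_of_nonneg_left (hB.trans ?_) hρ.le
          exact mul_le_mul_of_nonneg_left (Real.rpow_le_rpow_of_nonpos hs0 hss (by linarith))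
            (by positivity)
      _ = (2 * ρ + 1) * ‖s‖ ^ (-(1 + min ρ 1)) * ‖s‖ := by
          rw [min_eq_left hρ1, neg_add, Real.rpow_add hs0, Real.rpow_neg_one]
          field_simp
  · calc ρ * ‖betaIntegral (s + 1) ρ‖ ≤ ρ * ‖s‖⁻¹ := by
          refine mul_le_mul_of_nonneg_left ?_ hρ.le
          exact (norm_betaIntegral_le_inv_norm (by simp; linarith) hρ1).trans
            (inv_anti₀ hs0 hss)
      _ ≤ (2 * ρ + 1) * ‖s‖⁻¹ := by gcongr; linarith
      _ = (2 * ρ + 1) * ‖s‖ ^ (-(1 + min ρ 1)) * ‖s‖ := by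
          rw [min_eq_right hρ1.le, neg_add, Real.rpow_add hs0, Real.rpow_neg_one]
          field_simp

theorem continuousAt_betaIntegral_left {s w : ℂ} (hs : 0 < s.re) (hw : 0 < w.re) :
    ContinuousAt (betaIntegral · w) s := by
  have hΓ : ContinuousAt Complex.Gamma s := (differentiableAt_Gamma s fun m h => by
    have := congr_arg re h; simp at this; linarith [m.cast_nonneg (α := ℝ)]).continuousAt
  refine ContinuousAt.congr ?_ (eventuallyEq_of_mem
    ((isOpen_lt continuous_const continuous_re).mem_nhds hs)
    fun z (hz : 0 < z.re) => (betaIntegral_eq_Gamma_mul_div z w hz hw).symm)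
  simp_rw [div_eq_mul_inv]
  exact (hΓ.mul continuousAt_const).mul (differentiable_one_div_Gamma.continuous.continuousAt.comp
    (continuousAt_id.add continuousAt_const))

theorem integrable_betaIntegral_vertical {σ ρ : ℝ} (hσ : 0 < σ) (hρ : 0 < ρ) :
    Integrable (fun t : ℝ => betaIntegral (σ + t * I) (ρ + 1)) := by
  have hs : ∀ t : ℝ, 0 < ((σ : ℂ) + t * I).re := fun t => by simpa using hσ
  have hcont : Continuous (fun t : ℝ => betaIntegral (σ + t * I) (ρ + 1)) :=
    continuous_iff_continuousAt.2 fun t =>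
      (continuousAt_betaIntegral_left (w := (ρ : ℂ) + 1) (hs t) (by simp; linarith)).comp
        (f := fun t : ℝ => (σ : ℂ) + t * I) (by fun_prop)
  set r := 1 + min ρ 1
  have hr : 1 < r := by have := lt_min hρ one_pos; simp only [r]; linarith
  refine hcont.locallyIntegrable.integrable_of_isBigO_cocompact ?_
    ((integrable_one_add_norm (E := ℝ) (by simpa using hr)).integrableAtFilter (cocompact ℝ))
  refine IsBigO.of_bound ((2 * ρ + 1) * 2 ^ r) ?_
  filter_upwards [tendsto_norm_cocompact_atTop.eventually_ge_atTop 2] with t ht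
  have hts : ‖t‖ ≤ ‖(σ : ℂ) + t * I‖ := by simpa using abs_im_le_norm ((σ : ℂ) + t * I)
  have hs0 : 0 < ‖(σ : ℂ) + t * I‖ := by linarith
  rw [Real.norm_of_nonneg (by positivity)]
  calc ‖betaIntegral (σ + t * I) (ρ + 1)‖ ≤ (2 * ρ + 1) * ‖(σ : ℂ) + t * I‖ ^ (-r) :=
        norm_betaIntegral_add_one_le (hs t) (ht.trans hts) hρ
    _ = (2 * ρ + 1) * 2 ^ r * (2 * ‖(σ : ℂ) + t * I‖) ^ (-r) := by
        rw [Real.mul_rpow zero_le_two hs0.le, Real.rpow_neg zero_le_two, mul_assoc,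
          mul_inv_cancel_left₀ (by positivity)]
    _ ≤ (2 * ρ + 1) * 2 ^ r * (1 + ‖t‖) ^ (-r) := by
        gcongr ?_ * ?_
        exact Real.rpow_le_rpow_of_nonpos (by positivity) (by linarith) (by linarith)

end Complex

section

open Complex

noncomputable def rieszWeight (ρ u : ℝ) : ℂ := ((max (1 - u) 0 ^ ρ : ℝ) : ℂ)

theorem continuous_rieszWeight {ρ : ℝ} (hρ : 0 ≤ ρ) : Continuous (rieszWeight ρ) :=
  Complex.continuous_ofReal.comp
    (((continuous_const.sub continuous_id).max continuous_const).rpow_const fun _ => Or.inr hρ)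

theorem cpow_smul_rieszWeight_eqOn {ρ : ℝ} (hρ : 0 < ρ) (s : ℂ) :
    EqOn (fun u : ℝ => (u : ℂ) ^ (s - 1) • rieszWeight ρ u)
      ((Ioc 0 1).indicator fun u : ℝ => (u : ℂ) ^ (s - 1) * (1 - (u : ℂ)) ^ ((ρ : ℂ) + 1 - 1))
      (Ioi 0) := by
  intro u (hu : 0 < u)
  dsimp only
  by_cases hu1 : u ≤ 1
  · rw [indicator_of_mem (show u ∈ Ioc 0 1 from ⟨hu, hu1⟩), smul_eq_mul, rieszWeight,
      max_eq_left (by linarith), ofReal_cpow (by linarith)]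
    push_cast
    ring_nf
  · rw [indicator_of_notMem fun h => hu1 h.2, smul_eq_mul, rieszWeight,
      max_eq_right (by linarith), Real.zero_rpow hρ.ne', ofReal_zero, mul_zero]

theorem mellinConvergent_rieszWeight {ρ : ℝ} (hρ : 0 < ρ) {s : ℂ} (hs : 0 < s.re) :
    MellinConvergent (rieszWeight ρ) s := by
  refine IntegrableOn.congr_fun ?_ (cpow_smul_rieszWeight_eqOn hρ s).symm measurableSet_Ioi
  refine (integrable_indicator_iff measurableSet_Ioc).2 ?_ |>.integrableOn
  exact (betaIntegral_convergent hs (by simp; linarith)).1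

theorem mellin_rieszWeight {ρ : ℝ} (hρ : 0 < ρ) {s : ℂ} :
    mellin (rieszWeight ρ) s = betaIntegral s (ρ + 1) := by
  rw [mellin, setIntegral_congr_fun measurableSet_Ioi (cpow_smul_rieszWeight_eqOn hρ s),
    setIntegral_indicator measurableSet_Ioc, inter_eq_right.2 Ioc_subset_Ioi_self, betaIntegral,
    intervalIntegral.integral_of_le zero_le_one]

theorem integral_cpow_mul_betaIntegral {ρ σ y : ℝ} (hρ : 0 < ρ) (hσ : 0 < σ) (hy : 0 < y) :
    ∫ t : ℝ, (y : ℂ) ^ (-(σ + t * I)) * betaIntegral (σ + t * I) (ρ + 1)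
      = 2 * π * rieszWeight ρ y := by
  have h := mellinInv_mellin_eq σ (rieszWeight ρ) hy
    (mellinConvergent_rieszWeight hρ (by simpa using hσ))
    (by simpa [Complex.VerticalIntegrable, mellin_rieszWeight hρ] using
      integrable_betaIntegral_vertical hσ hρ)
    (continuous_rieszWeight hρ.le).continuousAt
  simp only [mellinInv, mellin_rieszWeight hρ, smul_eq_mul, Complex.real_smul] at h
  rw [← h, ← mul_assoc, show (2 * π : ℂ) * ((1 / (2 * π) : ℝ) : ℂ) = 1 by push_cast; field_simp,
    one_mul]

theorem rpow_mul_rieszWeight {ρ x : ℝ} (hx : 0 < x) (y : ℝ) :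
    ((x ^ ρ : ℝ) : ℂ) * rieszWeight ρ (y / x) = ((max (x - y) 0 ^ ρ : ℝ) : ℂ) := by
  rw [rieszWeight, ← Complex.ofReal_mul, ← Real.mul_rpow hx.le (le_max_right _ _),
    mul_max_of_nonneg _ _ hx.le, mul_sub, mul_one, mul_div_cancel₀ _ hx.ne', mul_zero]

noncomputable def perronKernel (ρ x : ℝ) (s : ℂ) : ℂ :=
  Complex.Gamma s * (x : ℂ) ^ (s + ρ) / Complex.Gamma (ρ + 1 + s)

theorem perronKernel_eq {ρ x : ℝ} (hρ : 0 < ρ) (hx : 0 < x) {s : ℂ} (hs : 0 < s.re) :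
    perronKernel ρ x s
      = ((x ^ ρ : ℝ) : ℂ) / Complex.Gamma (ρ + 1) * ((x : ℂ) ^ s * betaIntegral s (ρ + 1)) := by
  have hρ1 : 0 < ((ρ : ℂ) + 1).re := by simp; linarith
  have hsρ1 : 0 < (s + (ρ + 1)).re := by simp; linarith
  rw [perronKernel, betaIntegral_eq_Gamma_mul_div s _ hs hρ1,
    cpow_add _ _ (ofReal_ne_zero.2 hx.ne'), ofReal_cpow hx.le,
    show (ρ : ℂ) + 1 + s = s + (ρ + 1) by ring]
  field_simp [Gamma_ne_zero_of_re_pos hρ1, Gamma_ne_zero_of_re_pos hsρ1]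

theorem integrable_perronKernel {ρ σ x : ℝ} (hρ : 0 < ρ) (hσ : 0 < σ) (hx : 0 < x) :
    Integrable fun t : ℝ => perronKernel ρ x (σ + t * I) := by
  rw [show (fun t : ℝ => perronKernel ρ x (σ + t * I)) = fun t : ℝ => ((x ^ ρ : ℝ) : ℂ) /
      Complex.Gamma (ρ + 1) * ((x : ℂ) ^ ((σ : ℂ) + t * I) * betaIntegral (σ + t * I) (ρ + 1)) from
    funext fun t => perronKernel_eq hρ hx (by simpa using hσ)]
  refine ((integrable_betaIntegral_vertical hσ hρ).bdd_mul (c := x ^ σ) ?_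
    (ae_of_all _ fun t => ?_)).const_mul _
  · exact (Continuous.const_cpow (by fun_prop)
      (Or.inl (ofReal_ne_zero.2 hx.ne'))).aestronglyMeasurable
  · simp [norm_cpow_eq_rpow_re_of_pos hx]

theorem integral_cpow_mul_perronKernel {ρ σ x y : ℝ} (hρ : 0 < ρ) (hσ : 0 < σ) (hx : 0 < x)
    (hy : 0 < y) :
    ∫ t : ℝ, (y : ℂ) ^ (-(σ + t * I)) * perronKernel ρ x (σ + t * I)
      = 2 * π * ((max (x - y) 0 ^ ρ : ℝ) : ℂ) / Complex.Gamma (ρ + 1) := by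
  have hsplit : ∀ t : ℝ, (y : ℂ) ^ (-(σ + t * I)) * perronKernel ρ x (σ + t * I)
      = ((x ^ ρ : ℝ) : ℂ) / Complex.Gamma (ρ + 1) *
        (((y / x : ℝ) : ℂ) ^ (-(σ + t * I)) * betaIntegral (σ + t * I) (ρ + 1)) := fun t => by
    rw [perronKernel_eq hρ hx (by simpa using hσ), ofReal_div,
      div_cpow_ofReal_nonneg hy.le hx.le, cpow_neg (x : ℂ)]
    field_simp
  simp_rw [hsplit]
  rw [integral_const_mul, integral_cpow_mul_betaIntegral hρ hσ (div_pos hy hx),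
    ← rpow_mul_rieszWeight hx]
  ring

theorem integral_tsum_cpow_mul {c : ℕ → ℂ} {y : ℕ → ℝ} (hy : ∀ n, 0 < y n) {σ : ℝ}
    (hsum : Summable fun n => ‖c n‖ * y n ^ (-σ)) {K : ℝ → ℂ} (hK : Integrable K) :
    ∫ t : ℝ, (∑' n, c n * (y n : ℂ) ^ (-(σ + t * I))) * K t
      = ∑' n, c n * ∫ t : ℝ, (y n : ℂ) ^ (-(σ + t * I)) * K t := by
  have hnorm : ∀ n (t : ℝ), ‖(y n : ℂ) ^ (-(σ + t * I))‖ = y n ^ (-σ) := fun n t => by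
    simp [norm_cpow_eq_rpow_re_of_pos (hy n)]
  have hint : ∀ n, Integrable fun t : ℝ => (y n : ℂ) ^ (-(σ + t * I)) * K t := fun n =>
    hK.bdd_mul (Continuous.const_cpow (by fun_prop)
      (Or.inl (ofReal_ne_zero.2 (hy n).ne'))).aestronglyMeasurable
      (ae_of_all _ fun t => (hnorm n t).le)
  simp_rw [← tsum_mul_right, mul_assoc, ← integral_const_mul]
  refine (integral_tsum_of_summable_integral_norm (fun n => (hint n).const_mul (c n)) ?_).symm
  simp_rw [norm_mul, hnorm, integral_const_mul, ← mul_assoc]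
  exact hsum.mul_right _

end

theorem summable_norm_mul_rpow_neg_of_le {E : Type*} [SeminormedAddGroup E] {a : ℕ → E}
    {l : ℕ → ℝ} (hl0 : ∀ n, 0 < l n) (hl : Monotone l) {α σ : ℝ}
    (hα : Summable fun n => ‖a n‖ * l n ^ (-α)) (hασ : α ≤ σ) :
    Summable fun n => ‖a n‖ * l n ^ (-σ) := by
  refine Summable.of_nonneg_of_le (fun n => by have := hl0 n; positivity) (fun n => ?_)
    (hα.mul_right (l 0 ^ (α - σ)))
  rw [show -σ = -α + (α - σ) by ring, Real.rpow_add (hl0 n), ← mul_assoc]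
  exact mul_le_mul_of_nonneg_left (Real.rpow_le_rpow_of_nonpos (hl0 0) (hl (Nat.zero_le n))
    (by linarith)) (by have := hl0 n; positivity)

theorem max_sub_zero_rpow {ρ : ℝ} (hρ : 0 < ρ) (x y : ℝ) :
    max (x - y) 0 ^ ρ = if y ≤ x then (x - y) ^ ρ else 0 := by
  split_ifs with h
  · rw [max_eq_left (sub_nonneg.2 h)]
  · rw [max_eq_right (by linarith), Real.zero_rpow hρ.ne']

theorem perron_formula_general (a : ℕ → ℂ) (l : ℕ → ℝ) (α ρ σ x : ℝ)
    (hl0 : ∀ n, 0 < l n) (hlmono : StrictMono l)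
    (hsum : Summable fun n => ‖a n‖ * l n ^ (-α))
    (hρ : 0 < ρ) (hσ : 0 < σ) (hσα : α ≤ σ) (hx : 0 < x) :
    (1 / Complex.Gamma ((ρ:ℂ) + 1)) *
        ∑' n : ℕ, (if l n ≤ x then a n * (((x - l n) ^ ρ : ℝ) : ℂ) else 0)
      = (1 / (2 * (π:ℂ) * Complex.I)) *
          ∫ t : ℝ,
            Complex.Gamma ((σ:ℂ) + (t:ℂ) * Complex.I) *
              (∑' n : ℕ, a n * (l n : ℂ) ^ (-((σ:ℂ) + (t:ℂ) * Complex.I))) *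
              (x:ℂ) ^ (((σ:ℂ) + (t:ℂ) * Complex.I) + (ρ:ℂ)) /
              Complex.Gamma ((ρ:ℂ) + 1 + ((σ:ℂ) + (t:ℂ) * Complex.I)) * Complex.I := by
  have hintegrand : ∀ t : ℝ,
      Complex.Gamma ((σ:ℂ) + (t:ℂ) * Complex.I) *
        (∑' n : ℕ, a n * (l n : ℂ) ^ (-((σ:ℂ) + (t:ℂ) * Complex.I))) *
        (x:ℂ) ^ (((σ:ℂ) + (t:ℂ) * Complex.I) + (ρ:ℂ)) /
        Complex.Gamma ((ρ:ℂ) + 1 + ((σ:ℂ) + (t:ℂ) * Complex.I)) * Complex.I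
      = (∑' n : ℕ, a n * (l n : ℂ) ^ (-((σ:ℂ) + (t:ℂ) * Complex.I))) *
        (perronKernel ρ x (σ + t * Complex.I) * Complex.I) := fun t => by
    rw [perronKernel]; ring
  simp_rw [hintegrand]
  rw [integral_tsum_cpow_mul hl0 (summable_norm_mul_rpow_neg_of_le hl0 hlmono.monotone hsum hσα)
    ((integrable_perronKernel hρ hσ hx).mul_const _)]
  simp_rw [← mul_assoc, integral_mul_const, integral_cpow_mul_perronKernel hρ hσ hx (hl0 _),
    max_sub_zero_rpow hρ]
  rw [← tsum_mul_left, ← tsum_mul_left]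
  refine tsum_congr fun n => ?_
  split_ifs
  · field_simp
  · simp

/-- Perron-type formula of Chandrasekharan–Narasimhan: if
`φ(s) = Σ aₙ λₙ^(-s)` with `Σ |aₙ| λₙ^(-α) < ∞`, then for `ρ > 0`, `σ > 0`, `σ ≥ α`
and `x > 0` not equal to any `λₙ`,
`(1/Γ(ρ+1)) Σ_{λₙ ≤ x} aₙ (x-λₙ)^ρ = (1/2πi) ∫_(σ) Γ(s) φ(s) x^(s+ρ)/Γ(ρ+1+s) ds`. -/
theorem perron_formula (a : ℕ → ℂ) (l : ℕ → ℝ) (α ρ σ x : ℝ)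
    (hl0 : ∀ n, 0 < l n) (hlmono : StrictMono l) (hltop : Tendsto l atTop atTop)
    (hsum : Summable fun n => ‖a n‖ * l n ^ (-α))
    (hρ : 0 < ρ) (hσ : 0 < σ) (hσα : α ≤ σ) (hx : 0 < x) (hxl : ∀ n, x ≠ l n) :
    (1 / Complex.Gamma ((ρ:ℂ) + 1)) *
        ∑' n : ℕ, (if l n ≤ x then a n * (((x - l n) ^ ρ : ℝ) : ℂ) else 0)
      = (1 / (2 * (π:ℂ) * Complex.I)) *
          ∫ t : ℝ,
            Complex.Gamma ((σ:ℂ) + (t:ℂ) * Complex.I) *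
              (∑' n : ℕ, a n * (l n : ℂ) ^ (-((σ:ℂ) + (t:ℂ) * Complex.I))) *
              (x:ℂ) ^ (((σ:ℂ) + (t:ℂ) * Complex.I) + (ρ:ℂ)) /
              Complex.Gamma ((ρ:ℂ) + 1 + ((σ:ℂ) + (t:ℂ) * Complex.I)) * Complex.I :=
  perron_formula_general a l α ρ σ x hl0 hlmono hsum hρ hσ hσα hx
end

section
/- Let f(z) be continuous on the half-strips S = {z = x+iy : a ≤ x ≤ b, |y| > η}, analytic in the interior, and satisfying f(z) = O(e^{ε|y|}) in S for every ε > 0. If f(a+iy) = O(|y|^{k₁}) and f(b+iy) = O(|y|^{k₂}) for |y| > η, then f(x+iy) = O(|y|^{((k₁−k₂)x + k₂a − k₁b)/(a−b)}) uniformly for x ∈ [a,b], |y| > η. -/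
/-!
Write the target exponent as an affine function `α x + β` of `x = re z`, equal to `k₁` at `a` and
to `k₂` at `b`. On the upper half-plane the holomorphic weight `(-iz)^(αz + β)` has modulus
`|z|^(α x + β) e^{-α y arg(-iz)}`, and since `|y arg(-iz)| ≤ |x|` this is `y^(α x + β)` up to
bounded factors on the half-strip. Dividing `f` by it therefore gives a function that is bounded on
the boundary of the half-strip `{a ≤ x ≤ b, y ≥ η + 1}` and still of growth `O(e^{εy})` for every
`ε > 0`. The Phragmén–Lindelöf principle for half-strips (the maximum principle on rectangles
applied to the quotient times `e^{iδz}`, then `δ → 0`) bounds it inside. The strip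
`η < y < η + 1` only needs the crude bound `O(e^y)`, and the lower half-strip follows by `z ↦ -z`.
-/

open Set Filter Topology Real
open Complex (I)

variable {E : Type*} [NormedAddCommGroup E] [NormedSpace ℂ E]

section UpperHalfStrip

variable {a b η : ℝ}

theorem closure_Ioo_reProdIm_Ioi (hab : a < b) :
    closure (Ioo a b ×ℂ Ioi η) = Icc a b ×ℂ Ici η := by
  rw [Complex.closure_reProdIm, closure_Ioo hab.ne, closure_Ioi]

theorem frontier_Ioo_reProdIm_Ioi (hab : a < b) :
    frontier (Ioo a b ×ℂ Ioi η) = Icc a b ×ℂ {η} ∪ {a, b} ×ℂ Ici η := by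
  rw [Complex.frontier_reProdIm, closure_Ioo hab.ne, frontier_Ioi, frontier_Ioo hab, closure_Ioi]

theorem norm_le_of_upperHalfStrip_of_norm_le_top {f : ℂ → E} {Y M : ℝ} (hab : a < b)
    (hY : η < Y) (hfd : DiffContOnCl ℂ f (Ioo a b ×ℂ Ioi η))
    (hle : ∀ z ∈ frontier (Ioo a b ×ℂ Ioi η), ‖f z‖ ≤ M)
    (htop : ∀ z ∈ Icc a b ×ℂ {Y}, ‖f z‖ ≤ M) {z : ℂ} (hz : z ∈ Icc a b ×ℂ Icc η Y) :
    ‖f z‖ ≤ M := by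
  rw [frontier_Ioo_reProdIm_Ioi hab] at hle
  refine Complex.norm_le_of_forall_mem_frontier_norm_le
    ((Metric.isBounded_Ioo a b).reProdIm (Metric.isBounded_Ioo η Y))
    (hfd.mono fun w hw ↦ ⟨hw.1, hw.2.1⟩) (fun w hw ↦ ?_) ?_
  · rw [Complex.frontier_reProdIm, closure_Ioo hab.ne, closure_Ioo hY.ne, frontier_Ioo hab,
      frontier_Ioo hY] at hw
    rcases hw with ⟨hre, him | him⟩ | ⟨hre, him⟩
    · exact hle w (Or.inl ⟨hre, him⟩)
    · exact htop w ⟨hre, him⟩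
    · exact hle w (Or.inr ⟨hre, him.1⟩)
  · rwa [Complex.closure_reProdIm, closure_Ioo hab.ne, closure_Ioo hY.ne]

theorem norm_exp_ofReal_mul_I_mul_sub (δ η : ℝ) (w : ℂ) :
    ‖Complex.exp (δ * I * (w - η * I))‖ = Real.exp (-(δ * (w.im - η))) := by
  simp [Complex.norm_exp]

theorem norm_exp_smul_le_of_upperHalfStrip {f : ℂ → E} {ε δ M : ℝ} (hab : a < b) (hδ : 0 ≤ δ)
    (hεδ : ε < δ) (hfd : DiffContOnCl ℂ f (Ioo a b ×ℂ Ioi η))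
    (hgrowth : ∃ C, ∀ z ∈ Icc a b ×ℂ Ici η, ‖f z‖ ≤ C * Real.exp (ε * z.im))
    (hle : ∀ z ∈ frontier (Ioo a b ×ℂ Ioi η), ‖f z‖ ≤ M) {z : ℂ} (hz : z ∈ Icc a b ×ℂ Ici η) :
    ‖Complex.exp (δ * I * (z - η * I)) • f z‖ ≤ M := by
  obtain ⟨C, hC⟩ := hgrowth
  have hM : 0 ≤ M := (norm_nonneg _).trans <| hle (a + η * I) <| by
    rw [frontier_Ioo_reProdIm_Ioi hab]; exact Or.inl ⟨by simp [hab.le], by simp⟩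
  refine le_of_forall_gt_imp_ge_of_dense fun M' hM' ↦ ?_
  have hdecay : Tendsto (fun Y ↦ C * Real.exp (δ * η) * Real.exp (-(δ - ε) * Y)) atTop (𝓝 0) := by
    simpa using (Real.tendsto_exp_atBot.comp
      (tendsto_id.const_mul_atTop_of_neg (neg_lt_zero.2 (sub_pos.2 hεδ)))).const_mul
        (C * Real.exp (δ * η))
  obtain ⟨Y, hYM', hzY⟩ :=
    ((hdecay.eventually (ge_mem_nhds (hM.trans_lt hM'))).and (eventually_gt_atTop z.im)).exists
  refine norm_le_of_upperHalfStrip_of_norm_le_top hab (hz.2.trans_lt hzY)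
    ((Differentiable.diffContOnCl (f := fun w ↦ Complex.exp (δ * I * (w - η * I)))
      (by fun_prop)).smul hfd) (fun w hw ↦ ?_) (fun w hw ↦ ?_) ⟨hz.1, hz.2, hzY.le⟩
  · have hw' := frontier_subset_closure hw
    rw [closure_Ioo_reProdIm_Ioi hab] at hw'
    rw [norm_smul, norm_exp_ofReal_mul_I_mul_sub]
    refine (mul_le_of_le_one_left (norm_nonneg _) ?_).trans ((hle w hw).trans hM'.le)
    exact Real.exp_le_one_iff.2 (neg_nonpos.2 (mul_nonneg hδ (sub_nonneg.2 hw'.2)))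
  · have hwY : w.im = Y := hw.2
    calc ‖Complex.exp (δ * I * (w - η * I)) • f w‖
        = Real.exp (-(δ * (w.im - η))) * ‖f w‖ := by rw [norm_smul, norm_exp_ofReal_mul_I_mul_sub]
      _ ≤ Real.exp (-(δ * (w.im - η))) * (C * Real.exp (ε * w.im)) := by
        gcongr
        exact hC w ⟨hw.1, show η ≤ w.im by rw [hwY]; exact hz.2.trans hzY.le⟩
      _ = C * Real.exp (δ * η) * Real.exp (-(δ - ε) * Y) := by
        rw [hwY, mul_left_comm, mul_assoc, ← Real.exp_add, ← Real.exp_add]; ring_nf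
      _ ≤ M' := hYM'

theorem norm_le_of_upperHalfStrip {f : ℂ → E} {M : ℝ} (hab : a < b)
    (hfd : DiffContOnCl ℂ f (Ioo a b ×ℂ Ioi η))
    (hgrowth : ∀ ε > 0, ∃ C, ∀ z ∈ Icc a b ×ℂ Ici η, ‖f z‖ ≤ C * Real.exp (ε * z.im))
    (hle : ∀ z ∈ frontier (Ioo a b ×ℂ Ioi η), ‖f z‖ ≤ M) {z : ℂ} (hz : z ∈ Icc a b ×ℂ Ici η) :
    ‖f z‖ ≤ M := by
  have hlim : Tendsto (fun δ : ℝ ↦ ‖Complex.exp (δ * I * (z - η * I)) • f z‖) (𝓝[>] 0)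
      (𝓝 ‖f z‖) := by
    simp_rw [norm_smul, norm_exp_ofReal_mul_I_mul_sub]
    refine Tendsto.mono_left ?_ nhdsWithin_le_nhds
    simpa using ((continuous_id.mul continuous_const).neg.rexp.mul continuous_const).tendsto
      (0 : ℝ) (f := fun δ : ℝ ↦ Real.exp (-(δ * (z.im - η))) * ‖f z‖)
  refine le_of_tendsto hlim (eventually_nhdsWithin_of_forall fun δ hδ ↦ ?_)
  exact norm_exp_smul_le_of_upperHalfStrip hab hδ.le (half_lt_self hδ) hfd (hgrowth _ (half_pos hδ))
    hle hz

end UpperHalfStrip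

theorem le_exp_mul_of_abs_log_sub_le {u v D : ℝ} (hu : 0 < u) (hv : 0 < v)
    (h : |Real.log u - Real.log v| ≤ D) : u ≤ Real.exp D * v :=
  calc u = Real.exp (Real.log u) := (Real.exp_log hu).symm
    _ ≤ Real.exp (D + Real.log v) :=
      Real.exp_le_exp.2 (by linarith [le_abs_self (Real.log u - Real.log v)])
    _ = Real.exp D * v := by rw [Real.exp_add, Real.exp_log hv]

theorem abs_mul_add_le_of_mem_Icc {a b x : ℝ} (α β : ℝ) (hx : x ∈ Icc a b) :
    |α * x + β| ≤ |α| * max |a| |b| + |β| :=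
  calc |α * x + β| ≤ |α| * |x| + |β| := by rw [← abs_mul]; exact abs_add_le _ _
    _ ≤ _ := by gcongr; exact abs_le_max_abs_abs hx.1 hx.2

theorem exists_rpow_le_mul_exp (s : ℝ) {ε : ℝ} (hε : 0 < ε) :
    ∃ C, 0 ≤ C ∧ ∀ y, 1 ≤ y → y ^ s ≤ C * Real.exp (ε * y) := by
  obtain ⟨n, hn⟩ := exists_nat_ge s
  refine ⟨n.factorial / ε ^ n, by positivity, fun y hy ↦ ?_⟩
  calc y ^ s ≤ y ^ (n : ℝ) := Real.rpow_le_rpow_of_exponent_le hy hn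
    _ = n.factorial / ε ^ n * ((ε * y) ^ n / n.factorial) := by
      rw [Real.rpow_natCast]; field_simp; ring
    _ ≤ n.factorial / ε ^ n * Real.exp (ε * y) := by
      gcongr; exact Real.pow_div_factorial_le_exp _ (by positivity) n

theorem exp_neg_mul_le_rpow {y s Λ L : ℝ} (hy : 0 < y) (hs : |s| ≤ Λ) (hL : |Real.log y| ≤ L) :
    Real.exp (-(Λ * L)) ≤ y ^ s := by
  rw [Real.rpow_def_of_pos hy]
  have : |Real.log y * s| ≤ Λ * L := by
    rw [abs_mul, mul_comm]; exact mul_le_mul hs hL (abs_nonneg _) ((abs_nonneg _).trans hs)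
  exact Real.exp_le_exp.2 (by linarith [neg_abs_le (Real.log y * s)])

theorem abs_re_mul_arg_le_abs_im {u : ℂ} (hu : 0 < u.re) : |u.re * Complex.arg u| ≤ |u.im| := by
  have harg : |Complex.arg u| < π / 2 := Complex.abs_arg_lt_pi_div_two_iff.2 (Or.inl hu)
  have htan : |Complex.arg u| ≤ |Real.tan (Complex.arg u)| := by
    rcases le_total 0 (Complex.arg u) with h | h
    · rw [abs_of_nonneg h] at harg ⊢
      exact (le_tan h harg).trans (le_abs_self _)
    · rw [abs_of_nonpos h] at harg ⊢
      exact (le_tan (neg_nonneg.2 h) harg).trans (by rw [Real.tan_neg]; exact neg_le_abs _)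
  rw [Complex.tan_arg, abs_div, abs_of_pos hu] at htan
  rw [abs_mul, abs_of_pos hu]
  calc u.re * |Complex.arg u| ≤ u.re * (|u.im| / u.re) := by gcongr
    _ = |u.im| := by field_simp

theorem norm_inv_smul_le_of_le_mul_norm {c : ℂ} {t K : ℝ} (ht : 0 < t) (hc : t ≤ K * ‖c‖)
    (v : E) : ‖c⁻¹ • v‖ ≤ K * ‖v‖ / t := by
  rcases eq_or_ne c 0 with rfl | hc₀
  · simp only [inv_zero, zero_smul, norm_zero]
    rw [norm_zero, mul_zero] at hc
    exact absurd ht hc.not_gt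
  rw [le_div_iff₀ ht, norm_smul, norm_inv, inv_mul_eq_div, div_mul_eq_mul_div,
    div_le_iff₀ (norm_pos_iff.2 hc₀)]
  have := mul_le_mul_of_nonneg_left hc (norm_nonneg v)
  linarith

noncomputable def halfStripWeight (α β : ℝ) (z : ℂ) : ℂ := (-I * z) ^ ((α : ℂ) * z + β)

section HalfStripWeight

variable {α β : ℝ} {z : ℂ}

theorem halfStripWeight_ne_zero (hz : 0 < z.im) : halfStripWeight α β z ≠ 0 :=
  Complex.cpow_ne_zero_iff.2 (Or.inl (by rintro h; simp_all))

theorem differentiableAt_halfStripWeight (hz : 0 < z.im) :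
    DifferentiableAt ℂ (halfStripWeight α β) z :=
  DifferentiableAt.cpow (by fun_prop) (by fun_prop) (Or.inl (by simpa using hz))

theorem DiffContOnCl.inv_halfStripWeight_smul {f : ℂ → E} {s : Set ℂ}
    (hf : DiffContOnCl ℂ f s) (hs : ∀ z ∈ closure s, 0 < z.im) :
    DiffContOnCl ℂ (fun z ↦ (halfStripWeight α β z)⁻¹ • f z) s :=
  DiffContOnCl.smul (DifferentiableOn.diffContOnCl fun z hz ↦
    ((differentiableAt_halfStripWeight (hs z hz)).inv
      (halfStripWeight_ne_zero (hs z hz))).differentiableWithinAt) hf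

theorem log_norm_halfStripWeight (hz : 0 < z.im) :
    Real.log ‖halfStripWeight α β z‖ =
      (α * z.re + β) * Real.log ‖z‖ - α * z.im * Complex.arg (-I * z) := by
  have hnorm : ‖-I * z‖ = ‖z‖ := by simp
  have hz₀ : 0 < ‖-I * z‖ := hnorm ▸ norm_pos_iff.2 fun h ↦ by simp [h] at hz
  have hre : ((α : ℂ) * z + β).re = α * z.re + β := by simp
  have him : ((α : ℂ) * z + β).im = α * z.im := by simp
  rw [halfStripWeight, Complex.norm_cpow_of_ne_zero (norm_pos_iff.1 hz₀), Real.log_div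
    (Real.rpow_pos_of_pos hz₀ _).ne' (Real.exp_pos _).ne', Real.log_rpow hz₀, Real.log_exp, hre,
    him, hnorm]
  ring

theorem abs_log_norm_halfStripWeight_sub_le (hz : 1 ≤ z.im) :
    |Real.log ‖halfStripWeight α β z‖ - (α * z.re + β) * Real.log z.im| ≤
      |α * z.re + β| * Real.log (1 + |z.re|) + |α| * |z.re| := by
  have hy : 0 < z.im := zero_lt_one.trans_le hz
  have him_le : z.im ≤ ‖z‖ := (le_abs_self _).trans (Complex.abs_im_le_norm z)
  have hlog_lo : Real.log z.im ≤ Real.log ‖z‖ := Real.log_le_log hy him_le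
  have hlog_hi : Real.log ‖z‖ ≤ Real.log (1 + |z.re|) + Real.log z.im := by
    rw [← Real.log_mul (by positivity) hy.ne']
    refine Real.log_le_log (hy.trans_le him_le) ?_
    calc ‖z‖ ≤ |z.re| + |z.im| := Complex.norm_le_abs_re_add_abs_im z
      _ ≤ (1 + |z.re|) * z.im := by rw [abs_of_pos hy]; nlinarith [abs_nonneg z.re]
  have harg : |α * z.im * Complex.arg (-I * z)| ≤ |α| * |z.re| := by
    have hre : (-I * z).re = z.im := by simp
    have him : (-I * z).im = -z.re := by simp
    have := abs_re_mul_arg_le_abs_im (u := -I * z) (hre ▸ hy)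
    rw [hre, him, abs_neg] at this
    rw [mul_assoc, abs_mul]
    exact mul_le_mul_of_nonneg_left this (abs_nonneg α)
  have hs : |(α * z.re + β) * (Real.log ‖z‖ - Real.log z.im)| ≤
      |α * z.re + β| * Real.log (1 + |z.re|) := by
    rw [abs_mul, abs_of_nonneg (sub_nonneg.2 hlog_lo)]
    gcongr
    linarith
  rw [log_norm_halfStripWeight hy]
  calc _ = |(α * z.re + β) * (Real.log ‖z‖ - Real.log z.im) -
        α * z.im * Complex.arg (-I * z)| := by ring_nf
    _ ≤ _ := (abs_sub _ _).trans (add_le_add hs harg)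

theorem exists_norm_halfStripWeight_comparable (α β a b : ℝ) :
    ∃ D, ∀ z ∈ Icc a b ×ℂ Ici 1,
      ‖halfStripWeight α β z‖ ≤ Real.exp D * z.im ^ (α * z.re + β) ∧
      z.im ^ (α * z.re + β) ≤ Real.exp D * ‖halfStripWeight α β z‖ := by
  set R := max |a| |b|
  refine ⟨(|α| * R + |β|) * Real.log (1 + R) + |α| * R, fun z hz ↦ ?_⟩
  have hy : 0 < z.im := zero_lt_one.trans_le hz.2
  have hx : |z.re| ≤ R := abs_le_max_abs_abs hz.1.1 hz.1.2
  have hD : |Real.log ‖halfStripWeight α β z‖ - Real.log (z.im ^ (α * z.re + β))| ≤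
      (|α| * R + |β|) * Real.log (1 + R) + |α| * R := by
    rw [Real.log_rpow hy]
    refine (abs_log_norm_halfStripWeight_sub_le hz.2).trans ?_
    gcongr
    · exact Real.log_nonneg (by linarith [abs_nonneg z.re])
    · exact abs_mul_add_le_of_mem_Icc α β hz.1
  have hφ : 0 < ‖halfStripWeight α β z‖ := norm_pos_iff.2 (halfStripWeight_ne_zero hy)
  have hpow : 0 < z.im ^ (α * z.re + β) := Real.rpow_pos_of_pos hy _
  exact ⟨le_exp_mul_of_abs_log_sub_le hφ hpow hD,
    le_exp_mul_of_abs_log_sub_le hpow hφ (by rwa [abs_sub_comm])⟩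

theorem exists_norm_inv_halfStripWeight_smul_le_mul_exp {f : ℂ → E} {a b η : ℝ} (hη : 1 ≤ η)
    (hgrowth : ∀ ε > 0, ∃ C, ∀ z ∈ Icc a b ×ℂ Ici η, ‖f z‖ ≤ C * Real.exp (ε * z.im)) :
    ∀ ε > 0, ∃ C, ∀ z ∈ Icc a b ×ℂ Ici η,
      ‖(halfStripWeight α β z)⁻¹ • f z‖ ≤ C * Real.exp (ε * z.im) := by
  intro ε hε
  obtain ⟨D, hD⟩ := exists_norm_halfStripWeight_comparable α β a b
  obtain ⟨C, hC⟩ := hgrowth (ε / 2) (half_pos hε)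
  obtain ⟨K, hK₀, hK⟩ := exists_rpow_le_mul_exp (|α| * max |a| |b| + |β|) (half_pos hε)
  refine ⟨Real.exp D * C * K, fun z hz ↦ ?_⟩
  have hy : 1 ≤ z.im := hη.trans hz.2
  have hs := abs_le.1 (abs_mul_add_le_of_mem_Icc α β hz.1)
  calc ‖(halfStripWeight α β z)⁻¹ • f z‖ ≤ Real.exp D * ‖f z‖ / z.im ^ (α * z.re + β) :=
        norm_inv_smul_le_of_le_mul_norm (Real.rpow_pos_of_pos (zero_lt_one.trans_le hy) _)
          (hD z ⟨hz.1, hy⟩).2 _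
    _ = Real.exp D * ‖f z‖ * z.im ^ (-(α * z.re + β)) := by
      rw [Real.rpow_neg (zero_le_one.trans hy), div_eq_mul_inv]
    _ ≤ Real.exp D * ‖f z‖ * (K * Real.exp (ε / 2 * z.im)) := by
      gcongr
      exact (Real.rpow_le_rpow_of_exponent_le hy (by linarith)).trans (hK _ hy)
    _ ≤ Real.exp D * (C * Real.exp (ε / 2 * z.im)) * (K * Real.exp (ε / 2 * z.im)) := by
      gcongr; exact hC z hz
    _ = Real.exp D * C * K * Real.exp (ε * z.im) := by
      rw [show ε * z.im = ε / 2 * z.im + ε / 2 * z.im by ring, Real.exp_add]; ring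

end HalfStripWeight

theorem exists_norm_le_rpow_of_upperHalfStrip_of_one_le {f : ℂ → E} {a b η α β : ℝ}
    (hab : a < b) (hη : 1 ≤ η) (hfd : DiffContOnCl ℂ f (Ioo a b ×ℂ Ioi η))
    (hgrowth : ∀ ε > 0, ∃ C, ∀ z ∈ Icc a b ×ℂ Ici η, ‖f z‖ ≤ C * Real.exp (ε * z.im))
    (hle : ∃ C, ∀ z ∈ {a, b} ×ℂ Ici η, ‖f z‖ ≤ C * z.im ^ (α * z.re + β)) :
    ∃ C, ∀ z ∈ Icc a b ×ℂ Ici η, ‖f z‖ ≤ C * z.im ^ (α * z.re + β) := by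
  obtain ⟨C₀, hC₀⟩ := hle
  obtain ⟨D, hD⟩ := exists_norm_halfStripWeight_comparable α β a b
  have hy {z : ℂ} (hz : z ∈ Icc a b ×ℂ Ici η) : 0 < z.im := zero_lt_one.trans_le (hη.trans hz.2)
  have hD' {z : ℂ} (hz : z ∈ Icc a b ×ℂ Ici η) := hD z ⟨hz.1, hη.trans hz.2⟩
  set F : ℂ → E := fun z ↦ (halfStripWeight α β z)⁻¹ • f z
  have hFd : DiffContOnCl ℂ F (Ioo a b ×ℂ Ioi η) :=
    hfd.inv_halfStripWeight_smul fun z hz ↦ hy (closure_Ioo_reProdIm_Ioi hab ▸ hz)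
  obtain ⟨M, hM⟩ : ∃ M, ∀ z ∈ Icc a b ×ℂ {η}, ‖F z‖ ≤ M :=
    (isCompact_Icc.reProdIm isCompact_singleton).exists_bound_of_continuousOn
      (hFd.continuousOn.mono (by
        rw [closure_Ioo_reProdIm_Ioi hab]; exact fun z hz ↦ ⟨hz.1, le_of_eq hz.2.symm⟩))
  have hFle : ∀ z ∈ frontier (Ioo a b ×ℂ Ioi η), ‖F z‖ ≤ max (Real.exp D * C₀) M := by
    rw [frontier_Ioo_reProdIm_Ioi hab]
    rintro z (hz | hz)
    · exact (hM z hz).trans (le_max_right _ _)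
    have hz' : z ∈ Icc a b ×ℂ Ici η := by
      refine ⟨?_, hz.2⟩
      obtain h | h : z.re = a ∨ z.re = b := hz.1 <;> simp [h, hab.le]
    have hpow := Real.rpow_pos_of_pos (hy hz') (α * z.re + β)
    calc ‖F z‖ ≤ Real.exp D * ‖f z‖ / z.im ^ (α * z.re + β) :=
          norm_inv_smul_le_of_le_mul_norm hpow (hD' hz').2 _
      _ ≤ Real.exp D * (C₀ * z.im ^ (α * z.re + β)) / z.im ^ (α * z.re + β) := by
        gcongr; exact hC₀ z hz
      _ = Real.exp D * C₀ := by field_simp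
      _ ≤ max (Real.exp D * C₀) M := le_max_left _ _
  refine ⟨Real.exp D * max (Real.exp D * C₀) M, fun z hz ↦ ?_⟩
  have hFz := norm_le_of_upperHalfStrip hab hFd
    (exists_norm_inv_halfStripWeight_smul_le_mul_exp hη hgrowth) hFle hz
  have hφ := halfStripWeight_ne_zero (α := α) (β := β) (hy hz)
  calc ‖f z‖ = ‖halfStripWeight α β z‖ * ‖F z‖ := by
        rw [norm_smul, norm_inv, ← mul_assoc, mul_inv_cancel₀ (norm_ne_zero_iff.2 hφ), one_mul]
    _ ≤ Real.exp D * z.im ^ (α * z.re + β) * max (Real.exp D * C₀) M :=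
        mul_le_mul (hD' hz).1 hFz (norm_nonneg _)
          (mul_pos (Real.exp_pos D) (Real.rpow_pos_of_pos (hy hz) _)).le
    _ = Real.exp D * max (Real.exp D * C₀) M * z.im ^ (α * z.re + β) := by ring

theorem exists_norm_le_rpow_of_upperHalfStrip {f : ℂ → E} {a b η α β : ℝ} (hab : a < b)
    (hη : 0 < η) (hcont : ContinuousOn f (Icc a b ×ℂ Ioi η))
    (hdiff : DifferentiableOn ℂ f (Ioo a b ×ℂ Ioi η))
    (hgrowth : ∀ ε > 0, ∃ C, ∀ z ∈ Icc a b ×ℂ Ioi η, ‖f z‖ ≤ C * Real.exp (ε * z.im))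
    (hle : ∃ C, ∀ z ∈ {a, b} ×ℂ Ioi η, ‖f z‖ ≤ C * z.im ^ (α * z.re + β)) :
    ∃ C, ∀ z ∈ Icc a b ×ℂ Ioi η, ‖f z‖ ≤ C * z.im ^ (α * z.re + β) := by
  have hsub {s : Set ℝ} : s ×ℂ Ici (η + 1) ⊆ s ×ℂ Ioi η :=
    fun z hz ↦ ⟨hz.1, (lt_add_one η).trans_le hz.2⟩
  have hfd : DiffContOnCl ℂ f (Ioo a b ×ℂ Ioi (η + 1)) :=
    ⟨hdiff.mono fun z hz ↦ ⟨hz.1, (lt_add_one η).trans hz.2⟩,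
      hcont.mono (closure_Ioo_reProdIm_Ioi hab ▸ hsub)⟩
  obtain ⟨C₁, hC₁⟩ := exists_norm_le_rpow_of_upperHalfStrip_of_one_le hab (by linarith) hfd
    (fun ε hε ↦ (hgrowth ε hε).imp fun C hC z hz ↦ hC z (hsub hz))
    (hle.imp fun C hC z hz ↦ hC z (hsub hz))
  obtain ⟨C₀, hC₀⟩ := hgrowth 1 one_pos
  set Λ := |α| * max |a| |b| + |β|
  set L := |Real.log η| + |Real.log (η + 1)|
  refine ⟨max C₁ (|C₀| * Real.exp (η + 1) * Real.exp (Λ * L)), fun z hz ↦ ?_⟩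
  have hy₀ : 0 < z.im := hη.trans hz.2
  have hpow : 0 ≤ z.im ^ (α * z.re + β) := Real.rpow_nonneg hy₀.le _
  rcases le_or_gt (η + 1) z.im with hy | hy
  · exact (hC₁ z ⟨hz.1, hy⟩).trans (mul_le_mul_of_nonneg_right (le_max_left _ _) hpow)
  have hlog : |Real.log z.im| ≤ L := by
    have h₁ := Real.log_le_log hη (le_of_lt hz.2)
    have h₂ := Real.log_le_log hy₀ hy.le
    refine abs_le.2 ⟨?_, ?_⟩ <;>
      linarith [neg_abs_le (Real.log η), le_abs_self (Real.log (η + 1)), abs_nonneg (Real.log η),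
        abs_nonneg (Real.log (η + 1))]
  calc ‖f z‖ ≤ C₀ * Real.exp (1 * z.im) := hC₀ z hz
    _ ≤ |C₀| * Real.exp (η + 1) :=
      mul_le_mul (le_abs_self _) (Real.exp_le_exp.2 (by linarith)) (Real.exp_pos _).le
        (abs_nonneg _)
    _ = |C₀| * Real.exp (η + 1) * Real.exp (Λ * L) * Real.exp (-(Λ * L)) := by
      rw [mul_assoc _ (Real.exp _), ← Real.exp_add]; simp
    _ ≤ |C₀| * Real.exp (η + 1) * Real.exp (Λ * L) * z.im ^ (α * z.re + β) := by
      gcongr; exact exp_neg_mul_le_rpow hy₀ (abs_mul_add_le_of_mem_Icc α β hz.1) hlog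
    _ ≤ _ := mul_le_mul_of_nonneg_right (le_max_right _ _) hpow

theorem exists_norm_le_abs_im_rpow_of_strip {f : ℂ → E} {a b η α β : ℝ} (hab : a < b)
    (hη : 0 < η) (hcont : ContinuousOn f (Icc a b ×ℂ {y | η < |y|}))
    (hdiff : DifferentiableOn ℂ f (Ioo a b ×ℂ {y | η < |y|}))
    (hgrowth : ∀ ε > 0, ∃ C, ∀ z ∈ Icc a b ×ℂ {y | η < |y|}, ‖f z‖ ≤ C * Real.exp (ε * |z.im|))
    (hle : ∃ C, ∀ z ∈ {a, b} ×ℂ {y | η < |y|}, ‖f z‖ ≤ C * |z.im| ^ (α * z.re + β)) :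
    ∃ C, ∀ z ∈ Icc a b ×ℂ {y | η < |y|}, ‖f z‖ ≤ C * |z.im| ^ (α * z.re + β) := by
  have hup {s : Set ℝ} {z : ℂ} (hz : z ∈ s ×ℂ Ioi η) : z ∈ s ×ℂ {y | η < |y|} :=
    ⟨hz.1, show η < |z.im| from hz.2.trans_le (le_abs_self _)⟩
  have hneg {s : Set ℝ} {z : ℂ} (hz : z ∈ (-s) ×ℂ Ioi η) : -z ∈ s ×ℂ {y | η < |y|} :=
    ⟨hz.1, show η < |(-z).im| by simpa using hz.2.trans_le (le_abs_self _)⟩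
  have habs {y : ℝ} (hy : η < y) : |y| = y := abs_of_pos (hη.trans hy)
  obtain ⟨C₁, hC₁⟩ := exists_norm_le_rpow_of_upperHalfStrip hab hη
    (hcont.mono fun z hz ↦ hup hz) (hdiff.mono fun z hz ↦ hup hz)
    (fun ε hε ↦ (hgrowth ε hε).imp fun C hC z hz ↦ by
      simpa [habs hz.2] using hC z (hup hz))
    (hle.imp fun C hC z hz ↦ by simpa [habs hz.2] using hC z (hup hz))
  obtain ⟨C₂, hC₂⟩ := exists_norm_le_rpow_of_upperHalfStrip (f := fun z ↦ f (-z)) (α := -α)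
    (β := β) (neg_lt_neg hab) hη
    (hcont.comp continuousOn_neg fun z hz ↦ hneg (by rwa [neg_Icc]))
    (hdiff.comp (differentiableOn_neg _) fun z hz ↦ hneg (by rwa [neg_Ioo]))
    (fun ε hε ↦ (hgrowth ε hε).imp fun C hC z hz ↦ by
      simpa [habs hz.2] using hC (-z) (hneg (by rwa [neg_Icc])))
    (hle.imp fun C hC z hz ↦ by
      simpa [habs hz.2] using
        hC (-z) (hneg (by rwa [neg_insert, neg_singleton, pair_comm])))
  refine ⟨max C₁ C₂, fun z hz ↦ ?_⟩
  have hpow : 0 ≤ |z.im| ^ (α * z.re + β) := Real.rpow_nonneg (abs_nonneg _) _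
  rcases lt_abs.1 (show η < |z.im| from hz.2) with h | h
  · have := hC₁ z ⟨hz.1, h⟩
    rw [← abs_of_pos (hη.trans h)] at this
    exact this.trans (mul_le_mul_of_nonneg_right (le_max_left _ _) hpow)
  · have := hC₂ (-z) ⟨⟨neg_le_neg hz.1.2, neg_le_neg hz.1.1⟩, by simpa using h⟩
    rw [← abs_of_pos (show 0 < (-z).im by rw [Complex.neg_im]; linarith)] at this
    simp only [Complex.neg_im, abs_neg, Complex.neg_re, mul_neg, neg_mul, neg_neg] at this
    exact this.trans (mul_le_mul_of_nonneg_right (le_max_right _ _) hpow)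

theorem exists_norm_le_of_mem_pair_reProdIm {F : Type*} [Norm F] {f : ℂ → F} {a b : ℝ}
    {t : Set ℝ} (s : ℝ → ℝ)
    (ha : ∃ C, ∀ y ∈ t, ‖f (a + y * I)‖ ≤ C * |y| ^ s a)
    (hb : ∃ C, ∀ y ∈ t, ‖f (b + y * I)‖ ≤ C * |y| ^ s b) :
    ∃ C, ∀ z ∈ ({a, b} : Set ℝ) ×ℂ t, ‖f z‖ ≤ C * |z.im| ^ s z.re := by
  obtain ⟨C₁, hC₁⟩ := ha
  obtain ⟨C₂, hC₂⟩ := hb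
  refine ⟨max C₁ C₂, ?_⟩
  rintro z ⟨hre | hre, him⟩
  · have := hC₁ z.im him
    rw [← hre, Complex.re_add_im] at this
    exact this.trans (mul_le_mul_of_nonneg_right (le_max_left _ _) (by positivity))
  · have := hC₂ z.im him
    rw [← hre, Complex.re_add_im] at this
    exact this.trans (mul_le_mul_of_nonneg_right (le_max_right _ _) (by positivity))

/-- Phragmén–Lindelöf principle for the half-strips
`S = {z : a ≤ Re z ≤ b, |Im z| > η}`. -/
theorem phragmen_lindelof_strip (f : ℂ → ℂ) (a b η k₁ k₂ : ℝ) (hab : a < b) (hη : 0 < η)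
    (hcont : ContinuousOn f {z : ℂ | a ≤ z.re ∧ z.re ≤ b ∧ η < |z.im|})
    (hanal : DifferentiableOn ℂ f {z : ℂ | a < z.re ∧ z.re < b ∧ η < |z.im|})
    (hexp : ∀ ε : ℝ, 0 < ε → ∃ C : ℝ,
      ∀ z ∈ {z : ℂ | a ≤ z.re ∧ z.re ≤ b ∧ η < |z.im|}, ‖f z‖ ≤ C * Real.exp (ε * |z.im|))
    (ha : ∃ C₁ : ℝ, ∀ y : ℝ, η < |y| → ‖f ((a:ℂ) + (y:ℂ) * Complex.I)‖ ≤ C₁ * |y| ^ k₁)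
    (hb : ∃ C₂ : ℝ, ∀ y : ℝ, η < |y| → ‖f ((b:ℂ) + (y:ℂ) * Complex.I)‖ ≤ C₂ * |y| ^ k₂) :
    ∃ C : ℝ, ∀ z ∈ {z : ℂ | a ≤ z.re ∧ z.re ≤ b ∧ η < |z.im|},
      ‖f z‖ ≤ C * |z.im| ^ (((k₁ - k₂) * z.re + k₂ * a - k₁ * b) / (a - b)) := by
  have hab' : a - b ≠ 0 := sub_ne_zero.2 hab.ne
  obtain ⟨α, β, hexpo, hk₁, hk₂⟩ : ∃ α β : ℝ,
      (∀ x, ((k₁ - k₂) * x + k₂ * a - k₁ * b) / (a - b) = α * x + β) ∧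
        α * a + β = k₁ ∧ α * b + β = k₂ :=
    ⟨(k₁ - k₂) / (a - b), (k₂ * a - k₁ * b) / (a - b), fun x ↦ by field_simp; ring,
      by field_simp; ring, by field_simp; ring⟩
  have hclosed : {z : ℂ | a ≤ z.re ∧ z.re ≤ b ∧ η < |z.im|} = Icc a b ×ℂ {y | η < |y|} :=
    ext fun _ ↦ and_assoc.symm
  have hopen : {z : ℂ | a < z.re ∧ z.re < b ∧ η < |z.im|} = Ioo a b ×ℂ {y | η < |y|} :=
    ext fun _ ↦ and_assoc.symm
  rw [hclosed] at hcont hexp ⊢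
  rw [hopen] at hanal
  obtain ⟨C, hC⟩ := exists_norm_le_abs_im_rpow_of_strip hab hη hcont hanal hexp
    (exists_norm_le_of_mem_pair_reProdIm (fun x ↦ α * x + β) (hk₁ ▸ ha) (hk₂ ▸ hb))
  exact ⟨C, fun z hz ↦ hexpo z.re ▸ hC z hz⟩
end

section
/- For ρ > −1 and y > 0, ∫₀^∞ (Σ_{n ≤ x, n ∈ ℕ} a(n)(x−n)^ρ / Γ(ρ+1)) y^{ρ+1} e^{−yx} dx = Σ_{n≥1} a(n) e^{−ny}, provided Σ a(n) e^{−ny} converges absolutely for all y > 0 and a(n) = O(n^μ) for some μ ≥ 0. -/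
/-!
The Riesz mean of order `ρ` is `∑ a(n) R_ρ(x - n)` with `R_ρ(t) = t₊^ρ / Γ(ρ+1)`. After the
shift `x = t + n`, the Laplace transform of `R_ρ(x - n)` is a Gamma integral and equals
`e^{-ny} / y^{ρ+1}`. Since `∑ |a(n)| e^{-ny}` converges and the kernels are nonnegative, the
sum over `n` may be taken out of the integral, which gives `∑ a(n) e^{-ny}`.
-/

open MeasureTheory Real Set Filter Asymptotics

section Shift

variable {E : Type*} [NormedAddCommGroup E]

theorem integrableOn_Ioi_comp_add_right_iff (f : ℝ → E) (a c : ℝ) :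
    IntegrableOn (fun x => f (x + c)) (Ioi a) ↔ IntegrableOn f (Ioi (a + c)) := by
  simpa only [preimage_add_const_Ioi, add_sub_cancel_right, Function.comp_def] using
    (measurePreserving_add_right volume c).integrableOn_comp_preimage
      (MeasurableEquiv.addRight c).measurableEmbedding (f := f) (s := Ioi (a + c))

theorem integral_comp_add_right_Ioi [NormedSpace ℝ E] (f : ℝ → E) (a c : ℝ) :
    ∫ x in Ioi a, f (x + c) = ∫ x in Ioi (a + c), f x := by
  simpa only [preimage_add_const_Ioi, add_sub_cancel_right] using
    (measurePreserving_add_right volume c).setIntegral_preimage_emb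
      (MeasurableEquiv.addRight c).measurableEmbedding f (Ioi (a + c))

theorem ite_le_ae_eq_indicator_Ioi (g : ℝ → E) (c : ℝ) :
    (fun x => if c ≤ x then g x else 0) =ᵐ[volume] (Ioi c).indicator g := by
  have : (fun x => if c ≤ x then g x else 0) = (Ici c).indicator g := by
    ext x; simp [indicator_apply]
  rw [this]
  exact indicator_ae_eq_of_ae_eq_set Ioi_ae_eq_Ici.symm

theorem integrableOn_ite_le {g : ℝ → E} {a c : ℝ} (hg : IntegrableOn g (Ioi c)) :
    IntegrableOn (fun x => if c ≤ x then g x else 0) (Ioi a) :=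
  ((integrable_indicator_iff measurableSet_Ioi).mpr hg).integrableOn.congr_fun_ae
    (ae_restrict_of_ae (ite_le_ae_eq_indicator_Ioi g c).symm)

theorem setIntegral_Ioi_ite_le [NormedSpace ℝ E] (g : ℝ → E) {a c : ℝ} (hac : a ≤ c) :
    ∫ x in Ioi a, (if c ≤ x then g x else 0) = ∫ x in Ioi c, g x := by
  rw [integral_congr_ae (ae_restrict_of_ae (ite_le_ae_eq_indicator_Ioi g c)),
    setIntegral_indicator measurableSet_Ioi, Ioi_inter_Ioi, max_eq_right hac]

end Shift

section Laplace

variable {ρ y : ℝ}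

theorem integrableOn_rpow_mul_exp_neg_mul_Ioi (hρ : -1 < ρ) (hy : 0 < y) :
    IntegrableOn (fun t => t ^ ρ * exp (-y * t)) (Ioi 0) := by
  simpa only [rpow_one] using integrableOn_rpow_mul_exp_neg_mul_rpow hρ one_pos hy

theorem integrableOn_sub_rpow_mul_exp_neg_mul_Ioi (hρ : -1 < ρ) (hy : 0 < y) (c : ℝ) :
    IntegrableOn (fun x => (x - c) ^ ρ * exp (-y * x)) (Ioi c) := by
  rw [← zero_add c, ← integrableOn_Ioi_comp_add_right_iff]
  refine IntegrableOn.congr_fun ((integrableOn_rpow_mul_exp_neg_mul_Ioi hρ hy).const_mul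
    (exp (-y * c))) (fun t _ => ?_) measurableSet_Ioi
  simp only [zero_add, add_sub_cancel_right, mul_add, exp_add]
  ring

theorem integral_sub_rpow_mul_exp_neg_mul_Ioi (hρ : -1 < ρ) (hy : 0 < y) (c : ℝ) :
    ∫ x in Ioi c, (x - c) ^ ρ * exp (-y * x) = Gamma (ρ + 1) * exp (-c * y) / y ^ (ρ + 1) := by
  have hΓ := integral_rpow_mul_exp_neg_mul_Ioi (a := ρ + 1) (by linarith) hy
  rw [add_sub_cancel_right] at hΓ
  have hshift : ∀ t, (t + c - c) ^ ρ * exp (-y * (t + c))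
      = exp (-c * y) * (t ^ ρ * exp (-(y * t))) := fun t => by
    rw [add_sub_cancel_right, mul_add, exp_add]; ring_nf
  rw [← zero_add c, ← integral_comp_add_right_Ioi, zero_add]
  simp only [hshift]
  rw [integral_const_mul, hΓ, one_div, inv_rpow hy.le]
  ring

end Laplace

/-- `(x - c)₊^ρ / Γ(ρ+1)`: the weight of `a(c)` in the Riesz mean of order `ρ` at `x`. -/
noncomputable def rieszKernel (ρ c x : ℝ) : ℝ :=
  if c ≤ x then (x - c) ^ ρ / Gamma (ρ + 1) else 0

section RieszKernel

variable {ρ y : ℝ}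

theorem rieszKernel_nonneg (hρ : -1 < ρ) (c x : ℝ) : 0 ≤ rieszKernel ρ c x := by
  unfold rieszKernel
  split_ifs with hcx
  · exact div_nonneg (rpow_nonneg (sub_nonneg.mpr hcx) ρ) (Gamma_pos_of_pos (by linarith)).le
  · exact le_rfl

theorem rieszKernel_mul (ρ c x w : ℝ) :
    rieszKernel ρ c x * w = if c ≤ x then (x - c) ^ ρ * w / Gamma (ρ + 1) else 0 := by
  unfold rieszKernel
  split_ifs <;> ring

theorem integrableOn_rieszKernel_mul_exp_neg_mul (hρ : -1 < ρ) (hy : 0 < y) (a c : ℝ) :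
    IntegrableOn (fun x => rieszKernel ρ c x * exp (-y * x)) (Ioi a) := by
  simp only [rieszKernel_mul]
  exact integrableOn_ite_le ((integrableOn_sub_rpow_mul_exp_neg_mul_Ioi hρ hy c).div_const _)

theorem integral_rieszKernel_mul_exp_neg_mul (hρ : -1 < ρ) (hy : 0 < y) {c : ℝ} (hc : 0 ≤ c) :
    ∫ x in Ioi 0, rieszKernel ρ c x * exp (-y * x) = exp (-c * y) / y ^ (ρ + 1) := by
  have hΓ : Gamma (ρ + 1) ≠ 0 := (Gamma_pos_of_pos (by linarith)).ne'
  simp only [rieszKernel_mul]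
  rw [setIntegral_Ioi_ite_le _ hc, integral_div, integral_sub_rpow_mul_exp_neg_mul_Ioi hρ hy]
  field_simp

end RieszKernel

theorem integral_tsum_mul_ofReal {α ι 𝕜 : Type*} [MeasurableSpace α] {μ : Measure α}
    [Countable ι] [RCLike 𝕜] (b : ι → 𝕜) {K : ι → α → ℝ} (hK_nonneg : ∀ i x, 0 ≤ K i x)
    (hK_int : ∀ i, Integrable (K i) μ) (hsum : Summable fun i => ‖b i‖ * ∫ x, K i x ∂μ) :
    ∫ x, ∑' i, b i * (K i x : 𝕜) ∂μ = ∑' i, b i * ((∫ x, K i x ∂μ : ℝ) : 𝕜) := by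
  have hnorm : ∀ i, ∫ x, ‖b i * (K i x : 𝕜)‖ ∂μ = ‖b i‖ * ∫ x, K i x ∂μ := fun i => by
    simp only [norm_mul, RCLike.norm_ofReal, abs_of_nonneg (hK_nonneg i _), integral_const_mul]
  rw [← integral_tsum_of_summable_integral_norm (fun i => ((hK_int i).ofReal).const_mul (b i))
    (by simpa only [hnorm] using hsum)]
  simp only [integral_const_mul, integral_ofReal]

theorem laplace_of_riesz_mean_general (a : ℕ → ℂ) (ρ y : ℝ)
    (habs : ∀ y' : ℝ, 0 < y' → Summable fun n : ℕ => ‖a (n+1)‖ * Real.exp (-((n:ℝ)+1) * y'))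
    (hρ : -1 < ρ) (hy : 0 < y) :
    (∫ x in Set.Ioi (0:ℝ),
        ((∑' n : ℕ, if ((n:ℝ) + 1) ≤ x then a (n+1) * (((x - ((n:ℝ)+1)) ^ ρ : ℝ) : ℂ) else 0)
            / (Real.Gamma (ρ + 1) : ℂ))
          * ((y ^ (ρ + 1) * Real.exp (-y * x) : ℝ) : ℂ))
      = ∑' n : ℕ, a (n+1) * (Real.exp (-((n:ℝ)+1) * y) : ℂ) := by
  set K : ℕ → ℝ → ℝ := fun n x => y ^ (ρ + 1) * (rieszKernel ρ (n + 1) x * exp (-y * x))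
  have hK_int : ∀ n, ∫ x in Ioi 0, K n x = exp (-((n:ℝ) + 1) * y) := fun n => by
    simp only [K, integral_const_mul,
      integral_rieszKernel_mul_exp_neg_mul hρ hy (by positivity : (0:ℝ) ≤ n + 1)]
    field_simp
  have hintegrand : ∀ x, ((∑' n : ℕ, if ((n:ℝ) + 1) ≤ x then
        a (n+1) * (((x - ((n:ℝ)+1)) ^ ρ : ℝ) : ℂ) else 0) / (Real.Gamma (ρ + 1) : ℂ))
          * ((y ^ (ρ + 1) * Real.exp (-y * x) : ℝ) : ℂ) = ∑' n, a (n + 1) * (K n x : ℂ) :=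
    fun x => by
      rw [← tsum_div_const, ← tsum_mul_right]
      congr 1 with n
      simp only [K, rieszKernel]
      split_ifs <;> push_cast <;> ring
  have hK_nonneg : ∀ n x, 0 ≤ K n x := fun n x =>
    mul_nonneg (by positivity) (mul_nonneg (rieszKernel_nonneg hρ _ _) (by positivity))
  have hK_integrable : ∀ n, IntegrableOn (K n) (Ioi 0) := fun n =>
    (integrableOn_rieszKernel_mul_exp_neg_mul hρ hy 0 _).const_mul _
  simp only [hintegrand]
  refine (integral_tsum_mul_ofReal (fun n => a (n + 1)) hK_nonneg hK_integrable
    (by simpa only [hK_int] using habs y hy)).trans ?_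
  simp only [hK_int]
  -- the general lemma coerces through `RCLike.ofReal`, which is `Complex.ofReal` definitionally
  rfl

/-- For `ρ > -1` and `y > 0`:
`∫₀^∞ (Σ_{n ≤ x} a(n)(x-n)^ρ / Γ(ρ+1)) y^(ρ+1) e^(-yx) dx = Σ_{n≥1} a(n) e^(-ny)`,
given polynomial growth of `a(n)` and absolute convergence of `Σ a(n) e^(-ny)`. -/
theorem laplace_of_riesz_mean (a : ℕ → ℂ) (μ ρ y : ℝ) (hμ : 0 ≤ μ)
    (hgrow : (fun n : ℕ => a n) =O[atTop] fun n : ℕ => (n:ℝ) ^ μ)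
    (habs : ∀ y' : ℝ, 0 < y' → Summable fun n : ℕ => ‖a (n+1)‖ * Real.exp (-((n:ℝ)+1) * y'))
    (hρ : -1 < ρ) (hy : 0 < y) :
    (∫ x in Set.Ioi (0:ℝ),
        ((∑' n : ℕ, if ((n:ℝ) + 1) ≤ x then a (n+1) * (((x - ((n:ℝ)+1)) ^ ρ : ℝ) : ℂ) else 0)
            / (Real.Gamma (ρ + 1) : ℂ))
          * ((y ^ (ρ + 1) * Real.exp (-y * x) : ℝ) : ℂ))
      = ∑' n : ℕ, a (n+1) * (Real.exp (-((n:ℝ)+1) * y) : ℂ) :=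
  laplace_of_riesz_mean_general a ρ y habs hρ hy
end
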